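/- arXiv:1406.7643 — 4 statements merged into one kernel-verified Lean document; each statement's English description precedes it below -/
import Mathlib

section
/- A locally rich compact metric space is not locally doubling at any of its points: if X ∈ ℳ_C(1) satisfies Tan(X,x) = ℳ_C(1) for all x ∈ X, then for every x ∈ X and every N ∈ ℕ there exists r > 0 such that the closed ball B(x,r) cannot be covered by N closed balls of radius r/2. -/
open Metric GromovHausdorff Filter Topology

noncomputable section

/-- The closed ball `B(x,r)` equipped with the rescaled metric `r⁻¹ · d`. -/
noncomputable def scaledBallMetric {X : Type} [MetricSpace X] (x : X) (r : ℝ) (hr : 0 < r) :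
    MetricSpace (Metric.closedBall x r) where
  dist a b := r⁻¹ * dist (a : X) (b : X)
  dist_self a := by simp
  dist_comm a b := by simp [dist_comm]
  dist_triangle a b c := by
    have h := dist_triangle (a : X) (b : X) (c : X)
    have h' : (0:ℝ) ≤ r⁻¹ := (inv_pos.mpr hr).le
    calc r⁻¹ * dist (a : X) (c : X) ≤ r⁻¹ * (dist (a : X) (b : X) + dist (b : X) (c : X)) :=
          mul_le_mul_of_nonneg_left h h'
      _ = r⁻¹ * dist (a : X) (b : X) + r⁻¹ * dist (b : X) (c : X) := by ring
  eq_of_dist_eq_zero := by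
    intro a b h
    have hne : r⁻¹ ≠ 0 := ne_of_gt (inv_pos.mpr hr)
    have : dist (a : X) (b : X) = 0 := by
      rcases mul_eq_zero.mp h with h' | h'
      · exact absurd h' hne
      · exact h'
    exact Subtype.ext (dist_eq_zero.mp this)

theorem scaledBallMetric_topology_eq {X : Type} [MetricSpace X] (x : X) (r : ℝ) (hr : 0 < r) :
    (scaledBallMetric x r hr).toUniformSpace.toTopologicalSpace
      = (instTopologicalSpaceSubtype : TopologicalSpace (Metric.closedBall x r)) := by
  set B := Metric.closedBall x r
  set m2 := scaledBallMetric x r hr with hm2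
  have hball : ∀ (a : ↥B) (ε : ℝ),
      @Metric.ball _ m2.toPseudoMetricSpace a ε = Metric.ball a (r * ε) := by
    intro a ε
    ext b
    show @dist _ m2.toPseudoMetricSpace.toDist b a < ε ↔ dist b a < r * ε
    rw [Subtype.dist_eq]
    show r⁻¹ * dist (b : X) (a : X) < ε ↔ dist (b : X) (a : X) < r * ε
    rw [inv_mul_lt_iff₀ hr]
  apply TopologicalSpace.ext
  funext s
  rw [eq_iff_iff]
  rw [@Metric.isOpen_iff _ m2.toPseudoMetricSpace, Metric.isOpen_iff]
  constructor
  · intro h a ha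
    obtain ⟨ε, hε, hsub⟩ := h a ha
    exact ⟨r * ε, by positivity, by rw [← hball]; exact hsub⟩
  · intro h a ha
    obtain ⟨ε, hε, hsub⟩ := h a ha
    refine ⟨r⁻¹ * ε, by positivity, ?_⟩
    rw [hball]
    have : r * (r⁻¹ * ε) = ε := by field_simp
    rw [this]
    exact hsub

theorem scaledBallMetric_compactSpace {X : Type} [MetricSpace X] [CompactSpace X] (x : X)
    (r : ℝ) (hr : 0 < r) :
    @CompactSpace (Metric.closedBall x r)
      (scaledBallMetric x r hr).toUniformSpace.toTopologicalSpace := by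
  rw [scaledBallMetric_topology_eq x r hr]
  have : IsCompact (Metric.closedBall x r) := Metric.isClosed_closedBall.isCompact
  exact isCompact_iff_compactSpace.mp this

/-- The Gromov–Hausdorff class of the tangent piece `T_{x,r}(X)`, i.e. the closed ball
`B(x,r)` equipped with the metric `r⁻¹ · d`. -/
noncomputable def tangentGH (X : Type) [MetricSpace X] [CompactSpace X] (x : X) (r : ℝ)
    (hr : 0 < r) : GHSpace :=
  @toGHSpace (Metric.closedBall x r) (scaledBallMetric x r hr)
    (scaledBallMetric_compactSpace x r hr)
    ⟨⟨x, Metric.mem_closedBall_self hr.le⟩⟩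

/-- `ℳ_C(1)`: the collection of (isometry classes of) nonempty compact metric spaces of
diameter at most `1`, viewed inside the Gromov–Hausdorff space. -/
def MC1 : Set GHSpace := {p | Metric.diam (Set.univ : Set p.Rep) ≤ 1}

/-- The collection of tangent spaces of `X` at `x`: Gromov–Hausdorff limits of
`T_{x,r_i}(X)` along some sequence `r_i ↓ 0`. -/
def TanGH (X : Type) [MetricSpace X] [CompactSpace X] (x : X) : Set GHSpace :=
  {p | ∃ (t : ℕ → ℝ) (ht : ∀ n, 0 < t n), StrictAnti t ∧ Tendsto t atTop (nhds 0) ∧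
    Tendsto (fun n => tangentGH X x (t n) (ht n)) atTop (nhds p)}

/-- Auxiliary finite metric space: complete bipartite `K_{N+1,N+1}`, adjacent pairs at
distance `49/100`, same-side distinct pairs at distance `3/5`. -/
def Sat (N : ℕ) : Type := Fin 2 × Fin (N + 1)

instance satNonempty (N : ℕ) : Nonempty (Sat N) := ⟨(0, 0)⟩
instance satFinite (N : ℕ) : Finite (Sat N) := inferInstanceAs (Finite (Fin 2 × Fin (N + 1)))
instance satDecEq (N : ℕ) : DecidableEq (Sat N) :=
  inferInstanceAs (DecidableEq (Fin 2 × Fin (N + 1)))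

noncomputable instance satMetric (N : ℕ) : MetricSpace (Sat N) where
  dist p q := if p = q then 0 else if p.1 = q.1 then 3/5 else 49/100
  dist_self p := by simp
  dist_comm p q := by
    by_cases h : p = q
    · simp [h]
    · have h' : q ≠ p := fun hh => h hh.symm
      by_cases h2 : p.1 = q.1 <;> simp [h, h', h2, eq_comm]
  dist_triangle p q v := by
    by_cases hpv : p = v
    · subst hpv
      by_cases hpq : p = q
      · simp [hpq]
      · have h' : q ≠ p := fun hh => hpq hh.symm
        by_cases h2 : p.1 = q.1 <;> simp [hpq, h', h2, eq_comm] <;> norm_num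
    · by_cases hpq : p = q
      · subst hpq; simp
      · by_cases hqv : q = v
        · subst hqv; simp
        · have h1 : (if p.1 = q.1 then (3:ℝ)/5 else 49/100) ≥ 49/100 := by split <;> norm_num
          have h2 : (if q.1 = v.1 then (3:ℝ)/5 else 49/100) ≥ 49/100 := by split <;> norm_num
          have h3 : (if p.1 = v.1 then (3:ℝ)/5 else 49/100) ≤ 3/5 := by split <;> norm_num
          simp only [if_neg hpv, if_neg hpq, if_neg hqv]
          linarith
  eq_of_dist_eq_zero := by
    intro p q h
    by_contra hne
    by_cases h2 : p.1 = q.1 <;> simp [hne, h2] at h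

theorem Sat.dist_def (N : ℕ) (p q : Sat N) :
    dist p q = if p = q then 0 else if p.1 = q.1 then 3/5 else 49/100 := rfl

theorem Sat.dist_le_one (N : ℕ) (p q : Sat N) : dist p q ≤ 1 := by
  rw [Sat.dist_def]; split_ifs <;> norm_num

theorem Sat.diam_le_one (N : ℕ) : Metric.diam (Set.univ : Set (Sat N)) ≤ 1 :=
  Metric.diam_le_of_forall_dist_le (by norm_num)
    (fun p _ q _ => Sat.dist_le_one N p q)

/-- constructor -/
def satMk (N : ℕ) (i : Fin 2) (k : Fin (N + 1)) : Sat N := (i, k)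

theorem satMk_fst (N : ℕ) (i : Fin 2) (k : Fin (N + 1)) : (satMk N i k).1 = i := rfl

theorem satMk_inj (N : ℕ) {i i' : Fin 2} {k k' : Fin (N + 1)}
    (h : satMk N i k = satMk N i' k') : i = i' ∧ k = k' :=
  ⟨congrArg Prod.fst h, congrArg Prod.snd h⟩

/-- flip a side -/
def flipSide (i : Fin 2) : Fin 2 := ⟨1 - i.val, by omega⟩

theorem flipSide_ne (i : Fin 2) : flipSide i ≠ i := by
  fin_cases i <;> decide

theorem Sat.dist_satellite (N : ℕ) (y0 : Sat N) (k : Fin (N + 1)) :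
    dist (satMk N (flipSide y0.1) k) y0 = 49/100 := by
  have h1 : (satMk N (flipSide y0.1) k).1 ≠ y0.1 := flipSide_ne y0.1
  have h2 : satMk N (flipSide y0.1) k ≠ y0 := fun h => h1 (congrArg Prod.fst h)
  rw [Sat.dist_def, if_neg h2, if_neg h1]

theorem Sat.dist_satellites (N : ℕ) (i : Fin 2) (k k' : Fin (N + 1)) (h : k ≠ k') :
    dist (satMk N i k) (satMk N i k') = 3/5 := by
  have h2 : satMk N i k ≠ satMk N i k' := fun hh => h (satMk_inj N hh).2
  rw [Sat.dist_def, if_neg h2]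
  simp [satMk]


/-- A locally rich compact metric space is not locally doubling at any point: at every
point `x` and for every `N` there is a radius `r > 0` such that the closed ball `B(x,r)`
cannot be covered by `N` closed balls of radius `r/2`. -/
theorem locally_rich_not_locally_doubling (X : Type) [MetricSpace X] [CompactSpace X]
    [Nonempty X] (hdiam : Metric.diam (Set.univ : Set X) ≤ 1)
    (hrich : ∀ x : X, TanGH X x = MC1) :
    ∀ x : X, ∀ N : ℕ, ∃ r : ℝ, 0 < r ∧
      ¬ ∃ s : Finset X, s.card ≤ N ∧
        Metric.closedBall x r ⊆ ⋃ y ∈ s, Metric.closedBall y (r / 2) := by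
  intro x N
  by_contra hcon
  push_neg at hcon
  -- `Sat N` belongs to `ℳ_C(1)`
  have hYmem : toGHSpace (Sat N) ∈ MC1 := by
    obtain ⟨e⟩ := toGHSpace_eq_toGHSpace_iff_isometryEquiv.mp
      ((toGHSpace (Sat N)).toGHSpace_rep)
    show Metric.diam (Set.univ : Set (toGHSpace (Sat N)).Rep) ≤ 1
    rw [e.diam_univ]
    exact Sat.diam_le_one N
  have hmem : toGHSpace (Sat N) ∈ TanGH X x := by rw [hrich x]; exact hYmem
  obtain ⟨t, ht, -, -, htend⟩ := hmem
  obtain ⟨n, hn⟩ := Metric.tendsto_atTop.mp htend (1/1000) (by norm_num)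
  have hdist : dist (tangentGH X x (t n) (ht n)) (toGHSpace (Sat N)) < 1/1000 := hn n le_rfl
  set r := t n with hrdef
  have hr : 0 < r := ht n
  haveI nT : Nonempty (Metric.closedBall x r) := ⟨⟨x, Metric.mem_closedBall_self hr.le⟩⟩
  letI mT : MetricSpace (Metric.closedBall x r) := scaledBallMetric x r hr
  letI tT : TopologicalSpace (Metric.closedBall x r) :=
    mT.toUniformSpace.toTopologicalSpace
  haveI cT : CompactSpace (Metric.closedBall x r) := scaledBallMetric_compactSpace x r hr
  set L := @optimalGHInjl (Metric.closedBall x r) (Sat N) mT cT nT _ _ _ with hL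
  set J := @optimalGHInjr (Metric.closedBall x r) (Sat N) mT cT nT _ _ _ with hJ
  have hiso_l := @isometry_optimalGHInjl (Metric.closedBall x r) (Sat N) mT cT nT _ _ _
  have hiso_r := @isometry_optimalGHInjr (Metric.closedBall x r) (Sat N) mT cT nT _ _ _
  rw [← hL] at hiso_l
  rw [← hJ] at hiso_r
  have hldist : ∀ a b : Metric.closedBall x r,
      dist (L a) (L b) = r⁻¹ * dist (a : X) (b : X) := fun a b =>
    @Isometry.dist_eq _ _ mT.toPseudoMetricSpace _ _ hiso_l a b
  have hopt : hausdorffDist (Set.range L) (Set.range J) < 1/1000 := by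
    rw [hL, hJ, hausdorffDist_optimal]
    exact hdist
  have hfin : EMetric.hausdorffEdist (Set.range L) (Set.range J) ≠ ⊤ :=
    Metric.hausdorffEdist_ne_top_of_nonempty_of_bounded (Set.range_nonempty _)
      (Set.range_nonempty _) isBounded_of_compactSpace isBounded_of_compactSpace
  -- the basepoint and its partner in `Sat N`
  set x0 : Metric.closedBall x r := ⟨x, Metric.mem_closedBall_self hr.le⟩ with hx0
  obtain ⟨b, ⟨y0, rfl⟩, hy0⟩ :=
    Metric.exists_dist_lt_of_hausdorffDist_lt (Set.mem_range_self x0) hopt hfin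
  -- satellites
  have hz : ∀ k : Fin (N+1), ∃ z : Metric.closedBall x r,
      dist (L z) (J (satMk N (flipSide y0.1) k)) < 1/1000 := by
    intro k
    obtain ⟨a, ⟨z, rfl⟩, ha⟩ := Metric.exists_dist_lt_of_hausdorffDist_lt'
      (Set.mem_range_self (satMk N (flipSide y0.1) k)) hopt hfin
    exact ⟨z, ha⟩
  choose z hzd using hz
  -- satellites lie in `B(x, r/2)`
  have hz_near : ∀ k, (z k : X) ∈ Metric.closedBall x (r/2) := by
    intro k
    have h4 : dist (L (z k)) (L x0) ≤ dist (L (z k)) (J (satMk N (flipSide y0.1) k))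
        + dist (J (satMk N (flipSide y0.1) k)) (J y0) + dist (J y0) (L x0) :=
      dist_triangle4 _ _ _ _
    have hsat : dist (J (satMk N (flipSide y0.1) k)) (J y0) = 49/100 := by
      rw [hiso_r.dist_eq]; exact Sat.dist_satellite N y0 k
    have hcomm : dist (J y0) (L x0) = dist (L x0) (J y0) := dist_comm _ _
    have h5 : r⁻¹ * dist (z k : X) (x0 : X) < 1/2 := by
      rw [← hldist]
      calc dist (L (z k)) (L x0)
          ≤ dist (L (z k)) (J (satMk N (flipSide y0.1) k))
            + dist (J (satMk N (flipSide y0.1) k)) (J y0) + dist (J y0) (L x0) := h4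
        _ < 1/1000 + 49/100 + 1/1000 := by
            rw [hsat, hcomm]; linarith [hzd k, hy0]
        _ ≤ 1/2 := by norm_num
    have h6 : dist (z k : X) x < r * (1/2) := by
      have := (inv_mul_lt_iff₀ hr).mp h5
      simpa [hx0] using this
    have h7 : r * (1/2) = r/2 := by ring
    exact Metric.mem_closedBall.mpr (by rw [← h7]; exact h6.le)
  -- the covering at scale `r/2`
  obtain ⟨s, hcard, hcover⟩ := hcon (r/2) (by positivity)
  have hexy : ∀ k, ∃ y, y ∈ s ∧ (z k : X) ∈ Metric.closedBall y (r/2/2) := by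
    intro k
    have := hcover (hz_near k)
    simpa using this
  choose f hfs hfball using hexy
  have hinj : Function.Injective f := by
    intro k k' hkk
    by_contra hne
    have a1 : dist (z k : X) (f k) ≤ r/2/2 := Metric.mem_closedBall.mp (hfball k)
    have a2 : dist (z k' : X) (f k') ≤ r/2/2 := Metric.mem_closedBall.mp (hfball k')
    have hd1 : dist (z k : X) (z k' : X) ≤ r/2 :=
      calc dist (z k : X) (z k' : X) ≤ dist (z k : X) (f k) + dist (f k) (z k' : X) :=
            dist_triangle _ _ _
        _ ≤ r/2/2 + r/2/2 :=
            add_le_add a1 (by rw [hkk, dist_comm]; exact a2)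
        _ = r/2 := by ring
    have h6 : dist (L (z k)) (L (z k')) ≤ 1/2 := by
      rw [hldist]
      calc r⁻¹ * dist (z k : X) (z k' : X) ≤ r⁻¹ * (r/2) :=
            mul_le_mul_of_nonneg_left hd1 (inv_pos.mpr hr).le
        _ = 1/2 := by field_simp
    have hsat2 : dist (J (satMk N (flipSide y0.1) k)) (J (satMk N (flipSide y0.1) k')) = 3/5 := by
      rw [hiso_r.dist_eq]; exact Sat.dist_satellites N (flipSide y0.1) k k' hne
    have htri : dist (J (satMk N (flipSide y0.1) k)) (J (satMk N (flipSide y0.1) k'))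
        ≤ dist (J (satMk N (flipSide y0.1) k)) (L (z k)) + dist (L (z k)) (L (z k'))
          + dist (L (z k')) (J (satMk N (flipSide y0.1) k')) := dist_triangle4 _ _ _ _
    rw [hsat2, dist_comm (J (satMk N (flipSide y0.1) k)) (L (z k))] at htri
    linarith [hzd k, hzd k', h6]
  have hcard2 : (Finset.univ : Finset (Fin (N+1))).card ≤ s.card :=
    Finset.card_le_card_of_injOn f (fun k _ => hfs k) hinj.injOn
  rw [Finset.card_univ, Fintype.card_fin] at hcard2
  omega

end
end

section
/- There exists a nonempty compact set X ⊆ Q = [-1,1]^d such that Tan(X,x) = 𝒦_0 for all x in a dense subset of X, where 𝒦_0 = {K ∈ 𝒦 : 0 ∈ K}. -/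
open Metric Set Filter Topology
open EMetric TopologicalSpace

noncomputable section

/-- `d`-dimensional Euclidean space. -/
abbrev Euc (d : ℕ) := EuclideanSpace ℝ (Fin d)

/-- The cube `Q = [-1,1]^d`. -/
def cube (d : ℕ) : Set (Euc d) := {x | ∀ i, x i ∈ Set.Icc (-1 : ℝ) 1}

/-- `K ∈ 𝒦`: `K` is a nonempty compact subset of the cube `Q = [-1,1]^d`. -/
def IsKSet (d : ℕ) (K : Set (Euc d)) : Prop :=
  K.Nonempty ∧ IsCompact K ∧ K ⊆ cube d

/-- The collection `𝒦` of nonempty compact subsets of `Q`. -/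
def KColl (d : ℕ) : Set (Set (Euc d)) := {K | IsKSet d K}

/-- The zooming map `T_{x,t}(A) = {(y - x)/t : y ∈ A} ∩ Q`. -/
def zoom (d : ℕ) (x : Euc d) (t : ℝ) (A : Set (Euc d)) : Set (Euc d) :=
  ((fun y => t⁻¹ • (y - x)) '' A) ∩ cube d

/-- `F` is a tangent set of `A` at `x`: `F ∈ 𝒦` and `T_{x,t_n}(A) → F` in the Hausdorff
distance for some sequence `t_n ↓ 0`. -/
def IsTangentSet (d : ℕ) (A : Set (Euc d)) (x : Euc d) (F : Set (Euc d)) : Prop :=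
  IsKSet d F ∧ ∃ t : ℕ → ℝ, (∀ n, 0 < t n) ∧ StrictAnti t ∧ Tendsto t atTop (nhds 0) ∧
    Tendsto (fun n => hausdorffDist (zoom d x (t n) A) F) atTop (nhds 0)

/-- `Tan(A, x)`: the collection of all tangent sets of `A` at `x`. -/
def Tangents (d : ℕ) (A : Set (Euc d)) (x : Euc d) : Set (Set (Euc d)) :=
  {F | IsTangentSet d A x F}

/-- The relation `𝒜 ≲ ℬ`: there is `λ₀ > 0` such that every `A ∈ 𝒜` has, after a
translation-and-rescaling with ratio `λ ∈ (λ₀, λ₀⁻¹)`, a matching set in `ℬ`: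
`λ(A - a) = B - b` for some `B ∈ ℬ`, `a ∈ A`, `b ∈ B`. -/
def SubColl (d : ℕ) (𝒜 ℬ : Set (Set (Euc d))) : Prop :=
  ∃ lam0 : ℝ, 0 < lam0 ∧ ∀ A ∈ 𝒜, ∃ B ∈ ℬ, ∃ lam : ℝ, lam0 < lam ∧ lam < lam0⁻¹ ∧
    ∃ a ∈ A, ∃ b ∈ B, (fun y => lam • (y - a)) '' A = (fun y => y - b) '' B

/-- The equivalence `𝒜 ≈ ℬ`, i.e. `𝒜 ≲ ℬ` and `ℬ ≲ 𝒜`. -/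
def ApproxColl (d : ℕ) (𝒜 ℬ : Set (Set (Euc d))) : Prop :=
  SubColl d 𝒜 ℬ ∧ SubColl d ℬ 𝒜

/-- `E` is locally rich: `Tan(E,x) ≈ 𝒦` for every `x ∈ E`. -/
def LocallyRich (d : ℕ) (A : Set (Euc d)) : Prop :=
  ∀ x ∈ A, ApproxColl d (Tangents d A x) (KColl d)

/-- `𝒦₀`: the nonempty compact subsets of `Q` containing the origin. -/
def KColl0 (d : ℕ) : Set (Set (Euc d)) := {K | IsKSet d K ∧ (0 : Euc d) ∈ K}

/-- `𝒦₀⁺`: the nonempty compact subsets of `Q` containing the origin and contained in the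
half-space where the first coordinate is nonnegative. -/
def KColl0plus (d : ℕ) (hd : 0 < d) : Set (Set (Euc d)) :=
  {K | IsKSet d K ∧ (0 : Euc d) ∈ K ∧ ∀ x ∈ K, 0 ≤ x ⟨0, hd⟩}



lemma zero_mem_cube (d : ℕ) : (0 : Euc d) ∈ cube d := by
  intro i; simp [cube]

lemma abs_coord_le_norm {d : ℕ} (x : Euc d) (i : Fin d) : |x i| ≤ ‖x‖ := by
  have := EuclideanSpace.norm_eq x
  rw [this]
  have h1 : |x i| = Real.sqrt (‖x i‖ ^ 2) := by
    rw [Real.sqrt_sq_eq_abs]; simp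
  rw [h1]
  apply Real.sqrt_le_sqrt
  exact Finset.single_le_sum (f := fun j => ‖x j‖^2) (fun j _ => by positivity) (Finset.mem_univ i)

lemma mem_cube_of_norm_le {d : ℕ} {x : Euc d} (h : ‖x‖ ≤ 1) : x ∈ cube d := by
  intro i
  have := abs_coord_le_norm x i
  constructor <;> [nlinarith [abs_nonneg (x i), neg_abs_le (x i)]; nlinarith [le_abs_self (x i)]]

lemma norm_le_sqrt_of_mem_cube {d : ℕ} {x : Euc d} (h : x ∈ cube d) : ‖x‖ ≤ Real.sqrt d := by
  rw [EuclideanSpace.norm_eq]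
  apply Real.sqrt_le_sqrt
  calc ∑ i, ‖x i‖ ^ 2 ≤ ∑ _i : Fin d, (1:ℝ) := by
        apply Finset.sum_le_sum
        intro i _
        have h1 := (h i).1; have h2 := (h i).2
        have : |x i| ≤ 1 := abs_le.2 ⟨h1, h2⟩
        calc ‖x i‖^2 = |x i|^2 := by simp
          _ ≤ 1 := by nlinarith [abs_nonneg (x i)]
    _ = d := by simp

lemma isClosed_cube (d : ℕ) : IsClosed (cube d) := by
  have : cube d = ⋂ i, (fun x : Euc d => x i) ⁻¹' (Set.Icc (-1:ℝ) 1) := by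
    ext x; simp [cube]
  rw [this]
  exact isClosed_iInter fun i => IsClosed.preimage (EuclideanSpace.proj (𝕜 := ℝ) i).continuous isClosed_Icc

lemma isCompact_cube (d : ℕ) : IsCompact (cube d) := by
  apply Metric.isCompact_of_isClosed_isBounded (isClosed_cube d)
  apply (Metric.isBounded_iff_subset_closedBall 0).2
  exact ⟨Real.sqrt d, fun x hx => by simpa [Metric.mem_closedBall, dist_zero_right] using norm_le_sqrt_of_mem_cube hx⟩



lemma cube_bounded {d : ℕ} {s : Set (Euc d)} (h : s ⊆ cube d) : Bornology.IsBounded s :=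
  (isCompact_cube d).isBounded.subset h

lemma edist_fin {d : ℕ} {s1 s2 : Set (Euc d)} (h1 : s1 ⊆ cube d) (h2 : s2 ⊆ cube d)
    (n1 : s1.Nonempty) (n2 : s2.Nonempty) : hausdorffEdist s1 s2 ≠ ⊤ :=
  hausdorffEdist_ne_top_of_nonempty_of_bounded n1 n2 (cube_bounded h1) (cube_bounded h2)

lemma exists_denseFamily (d : ℕ) :
    ∃ F : ℕ → Set (Euc d), (∀ n, (F n).Finite ∧ F n ⊆ cube d ∧ (0 : Euc d) ∈ F n) ∧
      ∀ L : Set (Euc d), IsKSet d L → (0 : Euc d) ∈ L → ∀ ε > (0:ℝ), ∀ N : ℕ,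
        ∃ n ≥ N, hausdorffDist (F n) L ≤ ε := by
  classical
  set S : Set (NonemptyCompacts (Euc d)) :=
    {K | (K : Set (Euc d)) ⊆ cube d ∧ (0 : Euc d) ∈ (K : Set (Euc d))} with hS
  have hne : S.Nonempty := by
    refine ⟨⟨⟨cube d, isCompact_cube d⟩, ⟨0, zero_mem_cube d⟩⟩, ?_, ?_⟩
    · exact subset_rfl
    · exact zero_mem_cube d
  haveI : Nonempty ↥S := hne.to_subtype
  obtain ⟨u, hu⟩ := TopologicalSpace.exists_dense_seq ↥S
  -- finite nets
  have Hnet : ∀ p : ℕ × ℕ, ∃ G : Set (Euc d), G.Finite ∧ G ⊆ cube d ∧ (0 : Euc d) ∈ G ∧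
      hausdorffDist G ((u p.1 : NonemptyCompacts (Euc d)) : Set (Euc d)) ≤ 1 / (p.2 + 1) := by
    rintro ⟨j, k⟩
    set L : Set (Euc d) := ((u j : NonemptyCompacts (Euc d)) : Set (Euc d)) with hL
    have hLc : IsCompact L := (u j : NonemptyCompacts (Euc d)).isCompact
    have hLQ : L ⊆ cube d := (u j).2.1
    have hL0 : (0 : Euc d) ∈ L := (u j).2.2
    have hLne : L.Nonempty := (u j : NonemptyCompacts (Euc d)).nonempty
    have he : (0:ℝ) < 1 / (k + 1) := by positivity
    obtain ⟨T, hTL, hTfin, hTcov⟩ := hLc.finite_cover_balls he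
    refine ⟨T ∪ {0}, hTfin.union (finite_singleton 0), ?_, by simp, ?_⟩
    · exact union_subset (hTL.trans hLQ) (by simpa using hLQ hL0)
    · apply hausdorffDist_le_of_mem_dist (le_of_lt he)
      · intro x hx
        have hxL : x ∈ L := by
          rcases hx with hx | hx
          · exact hTL hx
          · simpa [mem_singleton_iff.1 hx]
        exact ⟨x, hxL, by simp; positivity⟩
      · intro y hy
        obtain ⟨x, hx, hyx⟩ := by simpa using hTcov hy
        exact ⟨x, Or.inl hx, le_of_lt (by simpa [dist_comm] using hyx)⟩
  choose G hGfin hGQ hG0 hGd using Hnet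
  refine ⟨fun n => G (Nat.unpair (Nat.unpair n).2), fun n => ⟨hGfin _, hGQ _, hG0 _⟩, ?_⟩
  intro L hL hL0 ε hε N
  set KL : NonemptyCompacts (Euc d) := ⟨⟨L, hL.2.1⟩, hL.1⟩ with hKL
  have hKLS : KL ∈ S := ⟨hL.2.2, hL0⟩
  obtain ⟨j, hj⟩ := Metric.denseRange_iff.1 hu ⟨KL, hKLS⟩ (ε/2) (by positivity)
  obtain ⟨k, hk⟩ := exists_nat_gt (2/ε)
  have hk' : 1 / ((k:ℝ) + 1) ≤ ε / 2 := by
    rw [div_le_div_iff₀ (by positivity) (by norm_num)]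
    have : (2:ℝ)/ε < k + 1 := lt_of_lt_of_le hk (by norm_num)
    rw [div_lt_iff₀ hε] at this
    linarith
  refine ⟨Nat.pair N (Nat.pair j k), Nat.left_le_pair _ _, ?_⟩
  simp only [Nat.unpair_pair]
  set Lj : Set (Euc d) := ((u j : NonemptyCompacts (Euc d)) : Set (Euc d))
  have hdist : hausdorffDist Lj L < ε / 2 := by
    have := hj
    rw [Subtype.dist_eq, NonemptyCompacts.dist_eq, hausdorffDist_comm] at this
    exact this
  have hLjQ : Lj ⊆ cube d := (u j).2.1
  have hLjne : Lj.Nonempty := (u j : NonemptyCompacts (Euc d)).nonempty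
  have htri : hausdorffDist (G (j, k)) L ≤ hausdorffDist (G (j, k)) Lj + hausdorffDist Lj L :=
    hausdorffDist_triangle (edist_fin (hGQ _) hLjQ ⟨0, hG0 _⟩ hLjne)
  calc hausdorffDist (G (j, k)) L ≤ hausdorffDist (G (j, k)) Lj + hausdorffDist Lj L := htri
    _ ≤ 1 / (k + 1) + ε / 2 := add_le_add (hGd (j, k)) (le_of_lt hdist)
    _ ≤ ε / 2 + ε / 2 := by linarith
    _ = ε := by ring


lemma exists_sep {d : ℕ} {F : Set (Euc d)} (hfin : F.Finite) :
    ∃ δ : ℝ, 0 < δ ∧ δ ≤ 1 ∧ ∀ u ∈ F, ∀ v ∈ F, u ≠ v → δ ≤ dist u v := by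
  classical
  set Fs := hfin.toFinset with hFs
  set P := (Fs ×ˢ Fs).filter (fun p => p.1 ≠ p.2) with hP
  by_cases hPe : P = ∅
  · refine ⟨1, one_pos, le_rfl, ?_⟩
    intro u hu v hv huv
    exfalso
    have : (u, v) ∈ P := by
      simp [hP, hFs, Finset.mem_filter, Finset.mem_product, hu, hv, huv]
    simp [hPe] at this
  · have hPne : P.Nonempty := Finset.nonempty_of_ne_empty hPe
    have hsne : (P.image (fun p => dist p.1 p.2)).Nonempty := hPne.image _
    refine ⟨min 1 ((P.image (fun p => dist p.1 p.2)).min' hsne), ?_, min_le_left _ _, ?_⟩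
    · apply lt_min one_pos
      obtain ⟨p, hp, hpd⟩ := Finset.mem_image.1 ((P.image (fun p => dist p.1 p.2)).min'_mem hsne)
      rw [hP, Finset.mem_filter] at hp
      rw [← hpd]
      exact dist_pos.2 hp.2
    · intro u hu v hv huv
      refine le_trans (min_le_right _ _) (Finset.min'_le _ _ ?_)
      rw [Finset.mem_image]
      exact ⟨(u, v), by simp [hP, Finset.mem_filter, Finset.mem_product, hFs, hu, hv, huv], rfl⟩

-- scales
section scales
variable (δ : ℕ → ℝ) (sq : ℝ)

def rr (n : ℕ) : ℝ := min (δ n / (8 * sq)) ((2:ℝ)⁻¹ ^ (n + 2))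

def tt : ℕ → ℝ
  | 0 => (2 * sq)⁻¹
  | n + 1 => tt n * rr δ sq n

variable (hδ : ∀ n, 0 < δ n) (hsq : 1 ≤ sq)

include hδ hsq

lemma rr_pos (n : ℕ) : 0 < rr δ sq n :=
  lt_min (by have := hδ n; positivity) (by positivity)

lemma rr_le (n : ℕ) : rr δ sq n ≤ (2:ℝ)⁻¹ ^ (n + 2) := min_le_right _ _

lemma rr_le_half (n : ℕ) : rr δ sq n ≤ 2⁻¹ := by
  refine (rr_le δ sq hδ hsq n).trans ?_
  calc ((2:ℝ)⁻¹) ^ (n+2) ≤ 2⁻¹ ^ 1 := by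
        apply pow_le_pow_of_le_one (by norm_num) (by norm_num) (by omega)
    _ = 2⁻¹ := pow_one _

lemma tt_pos (n : ℕ) : 0 < tt δ sq n := by
  induction n with
  | zero => simp [tt]; positivity
  | succ n ih => exact mul_pos ih (rr_pos δ sq hδ hsq n)

lemma tt_anti : StrictAnti (tt δ sq) := by
  apply strictAnti_nat_of_succ_lt
  intro n
  have h1 := tt_pos δ sq hδ hsq n
  have h2 := rr_le_half δ sq hδ hsq n
  calc tt δ sq (n+1) = tt δ sq n * rr δ sq n := rfl
    _ ≤ tt δ sq n * 2⁻¹ := by nlinarith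
    _ < tt δ sq n := by nlinarith

lemma tt_shift (a j : ℕ) : tt δ sq (a + j) ≤ tt δ sq a * 2⁻¹ ^ j := by
  induction j with
  | zero => simp
  | succ j ih =>
    have h2 := rr_le_half δ sq hδ hsq (a + j)
    have h3 := tt_pos δ sq hδ hsq (a + j)
    calc tt δ sq (a + (j+1)) = tt δ sq (a+j) * rr δ sq (a+j) := rfl
      _ ≤ tt δ sq (a+j) * 2⁻¹ := by nlinarith
      _ ≤ (tt δ sq a * 2⁻¹ ^ j) * 2⁻¹ := by nlinarith
      _ = tt δ sq a * 2⁻¹ ^ (j+1) := by ring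

lemma tt_summable : Summable (tt δ sq) := by
  have hgeo : Summable (fun n : ℕ => tt δ sq 0 * 2⁻¹ ^ n) :=
    (summable_geometric_of_lt_one (by norm_num) (by norm_num)).mul_left _
  exact Summable.of_nonneg_of_le (fun n => (tt_pos δ sq hδ hsq n).le)
    (fun n => by simpa using tt_shift δ sq hδ hsq 0 n) hgeo

lemma tt_tail (a : ℕ) : ∑' j, tt δ sq (a + j) ≤ 2 * tt δ sq a := by
  have hsum : Summable (fun j => tt δ sq (a + j)) := by
    have := (tt_summable δ sq hδ hsq).comp_injective (add_right_injective a)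
    exact this
  calc ∑' j, tt δ sq (a + j) ≤ ∑' j, tt δ sq a * 2⁻¹ ^ j := by
        have hgeo : Summable (fun j : ℕ => tt δ sq a * 2⁻¹ ^ j) :=
          (summable_geometric_of_lt_one (by norm_num) (by norm_num)).mul_left _
        exact Summable.tsum_le_tsum (tt_shift δ sq hδ hsq a) hsum hgeo
    _ = tt δ sq a * ∑' j, (2⁻¹:ℝ) ^ j := tsum_mul_left
    _ = 2 * tt δ sq a := by
        rw [tsum_geometric_of_lt_one (by norm_num) (by norm_num)]
        ring

lemma tt_tendsto : Tendsto (tt δ sq) atTop (nhds 0) := by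
  apply squeeze_zero (fun n => (tt_pos δ sq hδ hsq n).le)
    (fun n => by simpa using tt_shift δ sq hδ hsq 0 n)
  simpa using (tendsto_pow_atTop_nhds_zero_of_lt_one (by norm_num : (0:ℝ) ≤ 2⁻¹) (by norm_num)).const_mul (tt δ sq 0)

end scales




-- Part D

def sqd (d : ℕ) : ℝ := Real.sqrt d

lemma sqd_ge_one {d : ℕ} (hd : 0 < d) : 1 ≤ sqd d := by
  rw [sqd, show (1:ℝ) = Real.sqrt 1 by simp]
  exact Real.sqrt_le_sqrt (by exact_mod_cast hd)

lemma sqd_pos {d : ℕ} (hd : 0 < d) : 0 < sqd d := lt_of_lt_of_le one_pos (sqd_ge_one hd)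

section constr
variable {d : ℕ} (F : ℕ → Set (Euc d)) (δ : ℕ → ℝ)

def gg : (ℕ → ↥(cube d)) → Euc d := fun y => ∑' n, tt δ (sqd d) n • (y n : Euc d)

def AA : Set (ℕ → ↥(cube d)) := Set.pi univ fun n => Subtype.val ⁻¹' F n

def XX : Set (Euc d) := gg δ '' AA F

lemma mem_AA {y : ℕ → ↥(cube d)} : y ∈ AA F ↔ ∀ n, (y n : Euc d) ∈ F n := by
  simp [AA, Set.mem_pi]

variable (hd : 0 < d) (hδpos : ∀ n, 0 < δ n)
include hd hδpos

lemma summand_norm (y : ℕ → ↥(cube d)) (n : ℕ) :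
    ‖tt δ (sqd d) n • (y n : Euc d)‖ ≤ tt δ (sqd d) n * sqd d := by
  rw [norm_smul, Real.norm_eq_abs, abs_of_pos (tt_pos δ _ hδpos (sqd_ge_one hd) n)]
  exact mul_le_mul_of_nonneg_left (norm_le_sqrt_of_mem_cube (y n).2)
    (tt_pos δ _ hδpos (sqd_ge_one hd) n).le

lemma gsummand_summable (y : ℕ → ↥(cube d)) :
    Summable (fun n => tt δ (sqd d) n • (y n : Euc d)) := by
  apply Summable.of_norm_bounded ((tt_summable δ _ hδpos (sqd_ge_one hd)).mul_right (sqd d))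
  exact summand_norm δ hd hδpos y

lemma gg_cont : Continuous (gg (d := d) δ) := by
  apply continuous_tsum (f := fun n (y : ℕ → ↥(cube d)) => tt δ (sqd d) n • (y n : Euc d))
    (fun n => by fun_prop)
    ((tt_summable δ _ hδpos (sqd_ge_one hd)).mul_right (sqd d))
  intro n y
  exact summand_norm δ hd hδpos y n

lemma gg_diff (y y' : ℕ → ↥(cube d)) :
    gg δ y' - gg δ y = ∑' n, tt δ (sqd d) n • ((y' n : Euc d) - (y n : Euc d)) := by
  rw [gg, gg, ← Summable.tsum_sub (gsummand_summable δ hd hδpos y') (gsummand_summable δ hd hδpos y)]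
  congr 1
  funext n
  rw [smul_sub]

lemma diff_summable (c : ℕ → Euc d) (hc : ∀ n, ‖c n‖ ≤ 2 * sqd d) :
    Summable (fun n => tt δ (sqd d) n • c n) := by
  apply Summable.of_norm_bounded (((tt_summable δ _ hδpos (sqd_ge_one hd)).mul_right (2 * sqd d)))
  intro n
  rw [norm_smul, Real.norm_eq_abs, abs_of_pos (tt_pos δ _ hδpos (sqd_ge_one hd) n)]
  exact mul_le_mul_of_nonneg_left (hc n) (tt_pos δ _ hδpos (sqd_ge_one hd) n).le

lemma tail_bound (c : ℕ → Euc d) (hc : ∀ n, ‖c n‖ ≤ 2 * sqd d) (a : ℕ) :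
    ‖∑' j, tt δ (sqd d) (j + a) • c (j + a)‖ ≤ 4 * sqd d * tt δ (sqd d) a := by
  have hsq := sqd_ge_one hd
  have hsq0 := sqd_pos hd
  have h1 : Summable (fun j => tt δ (sqd d) (j + a) * (2 * sqd d)) := by
    have := (summable_nat_add_iff a).2 ((tt_summable δ _ hδpos hsq).mul_right (2 * sqd d))
    exact this
  have hnorms : Summable (fun j => ‖tt δ (sqd d) (j + a) • c (j + a)‖) := by
    apply Summable.of_nonneg_of_le (fun j => norm_nonneg _) _ h1
    intro j
    rw [norm_smul, Real.norm_eq_abs, abs_of_pos (tt_pos δ _ hδpos hsq _)]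
    exact mul_le_mul_of_nonneg_left (hc _) (tt_pos δ _ hδpos hsq _).le
  calc ‖∑' j, tt δ (sqd d) (j + a) • c (j + a)‖ ≤ ∑' j, ‖tt δ (sqd d) (j + a) • c (j + a)‖ :=
        norm_tsum_le_tsum_norm hnorms
    _ ≤ ∑' j, tt δ (sqd d) (j + a) * (2 * sqd d) := by
        apply Summable.tsum_le_tsum _ hnorms h1
        intro j
        rw [norm_smul, Real.norm_eq_abs, abs_of_pos (tt_pos δ _ hδpos hsq _)]
        exact mul_le_mul_of_nonneg_left (hc _) (tt_pos δ _ hδpos hsq _).le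
    _ = (∑' j, tt δ (sqd d) (a + j)) * (2 * sqd d) := by
        rw [← tsum_mul_right]
        congr 1; funext j; rw [add_comm]
    _ ≤ (2 * tt δ (sqd d) a) * (2 * sqd d) := by
        apply mul_le_mul_of_nonneg_right (tt_tail δ _ hδpos hsq a) (by positivity)
    _ = 4 * sqd d * tt δ (sqd d) a := by ring

lemma XX_subset_cube : XX F δ ⊆ cube d := by
  rintro _ ⟨y, _, rfl⟩
  have hsq := sqd_ge_one hd
  have hsq0 := sqd_pos hd
  apply mem_cube_of_norm_le
  have h1 : Summable (fun n => tt δ (sqd d) n * sqd d) :=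
    (tt_summable δ _ hδpos hsq).mul_right (sqd d)
  have hnorms : Summable (fun n => ‖tt δ (sqd d) n • (y n : Euc d)‖) :=
    Summable.of_nonneg_of_le (fun j => norm_nonneg _) (summand_norm δ hd hδpos y) h1
  calc ‖gg δ y‖ ≤ ∑' n, ‖tt δ (sqd d) n • (y n : Euc d)‖ := norm_tsum_le_tsum_norm hnorms
    _ ≤ ∑' n, tt δ (sqd d) n * sqd d := Summable.tsum_le_tsum (summand_norm δ hd hδpos y) hnorms h1
    _ = (∑' n, tt δ (sqd d) n) * sqd d := tsum_mul_right
    _ ≤ (2 * tt δ (sqd d) 0) * sqd d := by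
        apply mul_le_mul_of_nonneg_right _ (by positivity)
        have := tt_tail δ _ hδpos hsq 0
        simpa using this
    _ = 1 := by
        show 2 * (2 * sqd d)⁻¹ * sqd d = 1
        field_simp

lemma XX_compact (hFfin : ∀ n, (F n).Finite) : IsCompact (XX F δ) := by
  apply IsCompact.image _ (gg_cont δ hd hδpos)
  apply isCompact_univ_pi
  intro n
  exact ((hFfin n).preimage (Subtype.val_injective.injOn)).isCompact

lemma zoom_dist (hF : ∀ n, F n ⊆ cube d) (hF0 : ∀ n, (0:Euc d) ∈ F n)
    (hδsep : ∀ n, ∀ u ∈ F n, ∀ v ∈ F n, u ≠ v → δ n ≤ dist u v)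
    {y : ℕ → ↥(cube d)} (hy : y ∈ AA F) {N M : ℕ} (hyN : ∀ n, N ≤ n → (y n : Euc d) = 0)
    (hM : N ≤ M) :
    hausdorffDist (zoom d (gg δ y) (tt δ (sqd d) M) (XX F δ)) (F M)
      ≤ 4 * sqd d * rr δ (sqd d) M := by
  classical
  have hsq := sqd_ge_one hd
  have hsq0 := sqd_pos hd
  set sq := sqd d with hsqdef
  set s := tt δ sq with hsdef
  have hspos : ∀ n, 0 < s n := tt_pos δ sq hδpos hsq
  have hrpos : ∀ n, 0 < rr δ sq n := rr_pos δ sq hδpos hsq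
  have hbnd0 : (0:ℝ) ≤ 4 * sq * rr δ sq M := mul_nonneg (by linarith) (hrpos M).le
  apply hausdorffDist_le_of_mem_dist hbnd0
  · rintro w ⟨⟨p, hpX, rfl⟩, hwc⟩
    obtain ⟨y', hy', rfl⟩ := hpX
    set c : ℕ → Euc d := fun n => (y' n : Euc d) - (y n : Euc d) with hcdef
    have hcb : ∀ n, ‖c n‖ ≤ 2 * sq := by
      intro n
      calc ‖c n‖ ≤ ‖(y' n : Euc d)‖ + ‖(y n : Euc d)‖ := norm_sub_le _ _
        _ ≤ sq + sq := add_le_add (norm_le_sqrt_of_mem_cube (y' n).2)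
            (norm_le_sqrt_of_mem_cube (y n).2)
        _ = 2 * sq := by ring
    have hdiff : gg δ y' - gg δ y = ∑' n, s n • c n := gg_diff δ hd hδpos y y'
    have hsummf : Summable (fun n => s n • c n) := diff_summable δ hd hδpos c hcb
    by_cases hcase : ∀ n, n < M → y' n = y n
    · -- good branch
      have hsplit : ∑' n, s n • c n
          = (∑ i ∈ Finset.range (M+1), s i • c i) + ∑' j, s (j + (M+1)) • c (j + (M+1)) :=
        (Summable.sum_add_tsum_nat_add (M+1) hsummf).symm
      have hzero : ∀ i, i < M → s i • c i = 0 := by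
        intro i hi
        have : c i = 0 := by simp [hcdef, hcase i hi]
        rw [this, smul_zero]
      have hsum1 : ∑ i ∈ Finset.range (M+1), s i • c i = s M • c M := by
        rw [Finset.sum_range_succ, Finset.sum_eq_zero
          (fun i hi => hzero i (Finset.mem_range.1 hi)), zero_add]
      have hcM : c M = (y' M : Euc d) := by simp [hcdef, hyN M hM]
      refine ⟨(y' M : Euc d), (mem_AA F).1 hy' M, ?_⟩
      set R := ∑' j, s (j + (M+1)) • c (j + (M+1)) with hRdef
      have hw : (fun z => (s M)⁻¹ • (z - gg δ y)) (gg δ y')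
          = (y' M : Euc d) + (s M)⁻¹ • R := by
        show (s M)⁻¹ • (gg δ y' - gg δ y) = _
        rw [hdiff, hsplit, hsum1, hcM, smul_add, smul_smul,
          inv_mul_cancel₀ (hspos M).ne', one_smul]
      rw [hw]
      have hRb : ‖R‖ ≤ 4 * sq * s (M+1) := tail_bound δ hd hδpos c hcb (M+1)
      have : dist ((y' M : Euc d) + (s M)⁻¹ • R) ((y' M : Euc d)) = (s M)⁻¹ * ‖R‖ := by
        rw [dist_eq_norm, add_sub_cancel_left, norm_smul, Real.norm_eq_abs,
          abs_of_pos (inv_pos.2 (hspos M))]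
      rw [this]
      have hsM1 : s (M+1) = s M * rr δ sq M := rfl
      calc (s M)⁻¹ * ‖R‖ ≤ (s M)⁻¹ * (4 * sq * s (M+1)) := by
            apply mul_le_mul_of_nonneg_left hRb (inv_pos.2 (hspos M)).le
        _ = 4 * sq * rr δ sq M := by
            rw [hsM1, show (s M)⁻¹ * (4 * sq * (s M * rr δ sq M))
              = (s M)⁻¹ * s M * (4 * sq * rr δ sq M) by ring,
              inv_mul_cancel₀ (hspos M).ne', one_mul]
    · -- bad branch: impossible
      exfalso
      push_neg at hcase
      have hex : ∃ n, n < M ∧ y' n ≠ y n := hcase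
      set n0 := Nat.find hex with hn0def
      obtain ⟨hn0M, hn0ne⟩ := Nat.find_spec hex
      have hmin : ∀ m, m < n0 → y' m = y m := by
        intro m hm
        by_contra hne
        exact Nat.find_min hex hm ⟨lt_trans hm hn0M, hne⟩
      have hsplit : ∑' n, s n • c n
          = (∑ i ∈ Finset.range (n0+1), s i • c i) + ∑' j, s (j + (n0+1)) • c (j + (n0+1)) :=
        (Summable.sum_add_tsum_nat_add (n0+1) hsummf).symm
      have hsum1 : ∑ i ∈ Finset.range (n0+1), s i • c i = s n0 • c n0 := by
        rw [Finset.sum_range_succ, Finset.sum_eq_zero, zero_add]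
        intro i hi
        have : c i = 0 := by simp [hcdef, hmin i (Finset.mem_range.1 hi)]
        rw [this, smul_zero]
      set R := ∑' j, s (j + (n0+1)) • c (j + (n0+1)) with hRdef
      have hRb : ‖R‖ ≤ 4 * sq * s (n0+1) := tail_bound δ hd hδpos c hcb (n0+1)
      have hcn0 : δ n0 ≤ ‖c n0‖ := by
        rw [show ‖c n0‖ = dist (y' n0 : Euc d) (y n0 : Euc d) from (dist_eq_norm _ _).symm]
        exact hδsep n0 _ ((mem_AA F).1 hy' n0) _ ((mem_AA F).1 hy n0)
          (fun h => hn0ne (Subtype.coe_injective h))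
      have hlow : s n0 * δ n0 - 4 * sq * s (n0+1) ≤ ‖∑' n, s n • c n‖ := by
        rw [hsplit, hsum1]
        have h1 : ‖s n0 • c n0‖ ≤ ‖s n0 • c n0 + R‖ + ‖R‖ := by
          calc ‖s n0 • c n0‖ = ‖(s n0 • c n0 + R) - R‖ := by rw [add_sub_cancel_right]
            _ ≤ ‖s n0 • c n0 + R‖ + ‖R‖ := norm_sub_le _ _
        have h2 : s n0 * δ n0 ≤ ‖s n0 • c n0‖ := by
          rw [norm_smul, Real.norm_eq_abs, abs_of_pos (hspos n0)]
          exact mul_le_mul_of_nonneg_left hcn0 (hspos n0).le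
        linarith
      have hupp : ‖∑' n, s n • c n‖ ≤ s M * sq := by
        rw [← hdiff]
        have : gg δ y' - gg δ y = s M • ((fun z => (s M)⁻¹ • (z - gg δ y)) (gg δ y')) := by
          show _ = s M • ((s M)⁻¹ • (gg δ y' - gg δ y))
          rw [smul_inv_smul₀ (hspos M).ne']
        rw [this, norm_smul, Real.norm_eq_abs, abs_of_pos (hspos M)]
        exact mul_le_mul_of_nonneg_left (norm_le_sqrt_of_mem_cube hwc) (hspos M).le
      have hs1 : s (n0+1) ≤ s n0 * (δ n0 / (8 * sq)) := by
        have : s (n0+1) = s n0 * rr δ sq n0 := rfl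
        rw [this]
        exact mul_le_mul_of_nonneg_left (min_le_left _ _) (hspos n0).le
      have hsM : s M ≤ s (n0+1) := (tt_anti δ sq hδpos hsq).antitone (by omega)
      have hA : 0 < s n0 * δ n0 := mul_pos (hspos n0) (hδpos n0)
      have e1 : 4 * sq * (s n0 * (δ n0 / (8 * sq))) = s n0 * δ n0 / 2 := by
        field_simp
        ring
      have e2 : s n0 * (δ n0 / (8 * sq)) * sq = s n0 * δ n0 / 8 := by
        field_simp
      have hchain1 : 4 * sq * s (n0+1) ≤ s n0 * δ n0 / 2 := by
        rw [← e1]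
        apply mul_le_mul_of_nonneg_left hs1 (by linarith)
      have hchain2 : s M * sq ≤ s n0 * δ n0 / 8 := by
        rw [← e2]
        apply mul_le_mul_of_nonneg_right (le_trans hsM hs1) hsq0.le
      linarith
  · intro z hz
    have hzc : z ∈ cube d := hF M hz
    set y' : ℕ → ↥(cube d) := Function.update y M ⟨z, hzc⟩ with hy'def
    have hy'A : y' ∈ AA F := by
      rw [mem_AA]
      intro n
      by_cases hn : n = M
      · subst hn; simp [hy'def, hz]
      · simp [hy'def, Function.update_of_ne hn, (mem_AA F).1 hy n]
    have hkey : gg δ y' = gg δ y + s M • z := by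
      have hdiff : gg δ y' - gg δ y = ∑' n, s n • ((y' n : Euc d) - (y n : Euc d)) :=
        gg_diff δ hd hδpos y y'
      have hsingle : ∑' n, s n • ((y' n : Euc d) - (y n : Euc d)) = s M • z := by
        rw [tsum_eq_single M]
        · rw [hy'def]
          simp [Function.update_self, hyN M hM]
        · intro n hn
          rw [hy'def]
          simp [Function.update_of_ne hn]
      have := hdiff.trans hsingle
      linear_combination (norm := module) this
    refine ⟨z, ⟨⟨gg δ y', ⟨y', hy'A, rfl⟩, ?_⟩, hzc⟩, by simpa using hbnd0⟩
    show (s M)⁻¹ • (gg δ y' - gg δ y) = z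
    rw [hkey, add_sub_cancel_left, inv_smul_smul₀ (hspos M).ne']

end constr

/-- There exists a compact set `X ⊆ Q` with `Tan(X,x) = 𝒦₀` for all `x` in a dense subset
of `X`. -/
theorem exists_tangents_eq_KColl0_on_dense (d : ℕ) (hd : 0 < d) :
    ∃ X : Set (Euc d), IsKSet d X ∧ ∃ D : Set (Euc d), D ⊆ X ∧ X ⊆ closure D ∧
      ∀ x ∈ D, Tangents d X x = KColl0 d := by
  classical
  obtain ⟨F, hF, hFdense⟩ := exists_denseFamily d
  choose δ hδpos hδle1 hδsep using fun n => exists_sep (hF n).1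
  have hsq := sqd_ge_one hd
  have hsq0 := sqd_pos hd
  set sq := sqd d with hsqdef
  set s := tt δ sq with hsdef
  have hspos : ∀ n, 0 < s n := tt_pos δ sq hδpos hsq
  have hFfin : ∀ n, (F n).Finite := fun n => (hF n).1
  have hFQ : ∀ n, F n ⊆ cube d := fun n => (hF n).2.1
  have hF0 : ∀ n, (0:Euc d) ∈ F n := fun n => (hF n).2.2
  set X := XX F δ with hXdef
  set D := gg δ '' {y | y ∈ AA F ∧ ∃ N, ∀ n, N ≤ n → (y n : Euc d) = 0} with hDdef
  have y0A : (fun _ => (⟨0, zero_mem_cube d⟩ : ↥(cube d))) ∈ AA F :=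
    (mem_AA F).2 fun n => hF0 n
  have hXc : IsCompact X := XX_compact F δ hd hδpos hFfin
  have hXQ : X ⊆ cube d := XX_subset_cube F δ hd hδpos
  have hXne : X.Nonempty := ⟨gg δ _, ⟨_, y0A, rfl⟩⟩
  have hDX : D ⊆ X := image_mono fun y hy => hy.1
  have hcoe_bound : ∀ (y y' : ℕ → ↥(cube d)) (n : ℕ),
      ‖(y' n : Euc d) - (y n : Euc d)‖ ≤ 2 * sq := by
    intro y y' n
    calc ‖(y' n : Euc d) - (y n : Euc d)‖ ≤ ‖(y' n : Euc d)‖ + ‖(y n : Euc d)‖ := norm_sub_le _ _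
      _ ≤ sq + sq := add_le_add (norm_le_sqrt_of_mem_cube (y' n).2)
          (norm_le_sqrt_of_mem_cube (y n).2)
      _ = 2 * sq := by ring
  refine ⟨X, ⟨hXne, hXc, hXQ⟩, D, hDX, ?_, ?_⟩
  · -- X ⊆ closure D
    rintro _ ⟨y, hyA, rfl⟩
    rw [Metric.mem_closure_iff]
    intro ε hε
    have htend : Tendsto (fun N => 4 * sq * s N) atTop (nhds 0) := by
      simpa using (tt_tendsto δ sq hδpos hsq).const_mul (4 * sq)
    obtain ⟨N, hN⟩ := (htend.eventually (gt_mem_nhds hε)).exists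
    set yT : ℕ → ↥(cube d) := fun n => if n < N then y n else ⟨0, zero_mem_cube d⟩ with hyTdef
    have hyTA : yT ∈ AA F := (mem_AA F).2 fun n => by
      by_cases h : n < N <;> simp [hyTdef, h, hF0 n, (mem_AA F).1 hyA n]
    have hyTD : gg δ yT ∈ D :=
      ⟨yT, ⟨hyTA, N, fun n hn => by simp [hyTdef, Nat.not_lt.2 hn]⟩, rfl⟩
    refine ⟨gg δ yT, hyTD, ?_⟩
    set c : ℕ → Euc d := fun n => (y n : Euc d) - (yT n : Euc d) with hcdef
    have hcb : ∀ n, ‖c n‖ ≤ 2 * sq := fun n => hcoe_bound yT y n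
    have hdiff : gg δ y - gg δ yT = ∑' n, s n • c n := gg_diff δ hd hδpos yT y
    have hsummf : Summable (fun n => s n • c n) := diff_summable δ hd hδpos c hcb
    have hczero : ∀ i, i < N → s i • c i = 0 := by
      intro i hi
      have : c i = 0 := by simp [hcdef, hyTdef, hi]
      rw [this, smul_zero]
    have hsplit : ∑' n, s n • c n
        = (∑ i ∈ Finset.range N, s i • c i) + ∑' j, s (j + N) • c (j + N) :=
      (Summable.sum_add_tsum_nat_add N hsummf).symm
    have hzsum : ∑ i ∈ Finset.range N, s i • c i = 0 :=
      Finset.sum_eq_zero fun i hi => hczero i (Finset.mem_range.1 hi)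
    have hdle : dist (gg δ y) (gg δ yT) ≤ 4 * sq * s N := by
      rw [dist_eq_norm, hdiff, hsplit, hzsum, zero_add]
      exact tail_bound δ hd hδpos c hcb N
    exact lt_of_le_of_lt hdle hN
  · -- tangents
    rintro _ ⟨y, ⟨hyA, N, hyN⟩, rfl⟩
    have hxD : gg δ y ∈ D := ⟨y, ⟨hyA, N, hyN⟩, rfl⟩
    have hxX : gg δ y ∈ X := hDX hxD
    have h0z : ∀ u : ℝ, (0:Euc d) ∈ zoom d (gg δ y) u X :=
      fun u => ⟨⟨gg δ y, hxX, by simp⟩, zero_mem_cube d⟩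
    have hzQ : ∀ u : ℝ, zoom d (gg δ y) u X ⊆ cube d := fun u => inter_subset_right
    ext K
    simp only [Tangents, mem_setOf_eq, IsTangentSet, KColl0]
    constructor
    · rintro ⟨hK, t', hpos', hanti', ht0', hconv'⟩
      refine ⟨hK, ?_⟩
      have hKne : K.Nonempty := hK.1
      have h0 : ∀ n, infDist (0:Euc d) K ≤ hausdorffDist (zoom d (gg δ y) (t' n) X) K :=
        fun n => infDist_le_hausdorffDist_of_mem (h0z (t' n))
          (edist_fin (hzQ _) hK.2.2 ⟨0, h0z _⟩ hKne)
      have hle : infDist (0:Euc d) K ≤ 0 := ge_of_tendsto hconv' (Eventually.of_forall h0)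
      exact (hK.2.1.isClosed.mem_iff_infDist_zero hKne).2 (le_antisymm hle infDist_nonneg)
    · rintro ⟨hK, hK0⟩
      have Hsel : ∀ k m : ℕ, ∃ n, m ≤ n ∧ N ≤ n ∧
          hausdorffDist (F n) K ≤ 1 / ((k:ℝ) + 1) := by
        intro k m
        obtain ⟨n, hn, hnd⟩ := hFdense K hK hK0 (1 / ((k:ℝ)+1)) (by positivity) (max m N)
        exact ⟨n, le_trans (le_max_left _ _) hn, le_trans (le_max_right _ _) hn, hnd⟩
      set φ : ℕ → ℕ := fun k => Nat.rec (Classical.choose (Hsel 0 0))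
        (fun k ih => Classical.choose (Hsel (k+1) (ih+1))) k with hφdef
      have hφsucc : ∀ k : ℕ, φ k + 1 ≤ φ (k+1) ∧ N ≤ φ (k+1) ∧
          hausdorffDist (F (φ (k+1))) K ≤ 1 / ((((k+1 : ℕ)):ℝ) + 1) :=
        fun k => Classical.choose_spec (Hsel (k+1) (φ k + 1))
      have hφ0 := Classical.choose_spec (Hsel 0 0)
      have hφN : ∀ k, N ≤ φ k := by
        intro k; cases k with
        | zero => exact hφ0.2.1
        | succ k => exact (hφsucc k).2.1
      have hφd : ∀ k, hausdorffDist (F (φ k)) K ≤ 1 / ((k:ℝ) + 1) := by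
        intro k; cases k with
        | zero => exact hφ0.2.2
        | succ k => exact (hφsucc k).2.2
      have hφmono : StrictMono φ := strictMono_nat_of_lt_succ fun k =>
        lt_of_lt_of_le (Nat.lt_succ_self _) (hφsucc k).1
      refine ⟨hK, fun k => s (φ k), fun k => hspos _,
        fun a b hab => tt_anti δ sq hδpos hsq (hφmono hab),
        (tt_tendsto δ sq hδpos hsq).comp hφmono.tendsto_atTop, ?_⟩
      have hzd : ∀ k, hausdorffDist (zoom d (gg δ y) (s (φ k)) X) (F (φ k))
          ≤ 4 * sq * rr δ sq (φ k) :=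
        fun k => zoom_dist F δ hd hδpos hFQ hF0 hδsep hyA hyN (hφN k)
      have hbound : ∀ k, hausdorffDist (zoom d (gg δ y) (s (φ k)) X) K
          ≤ 4 * sq * (2⁻¹:ℝ)^k + 1 / ((k:ℝ)+1) := by
        intro k
        have hzne : (zoom d (gg δ y) (s (φ k)) X).Nonempty := ⟨0, h0z _⟩
        have hFne : (F (φ k)).Nonempty := ⟨0, hF0 _⟩
        have htri : hausdorffDist (zoom d (gg δ y) (s (φ k)) X) K
            ≤ hausdorffDist (zoom d (gg δ y) (s (φ k)) X) (F (φ k))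
              + hausdorffDist (F (φ k)) K :=
          hausdorffDist_triangle (edist_fin (hzQ _) (hFQ _) hzne hFne)
        have hrk : rr δ sq (φ k) ≤ (2⁻¹:ℝ)^k := by
          refine (rr_le δ sq hδpos hsq (φ k)).trans ?_
          apply pow_le_pow_of_le_one (by norm_num) (by norm_num)
          have : k ≤ φ k := hφmono.le_apply
          omega
        have : 4 * sq * rr δ sq (φ k) ≤ 4 * sq * (2⁻¹:ℝ)^k :=
          mul_le_mul_of_nonneg_left hrk (by linarith)
        linarith [hzd k, hφd k]
      apply squeeze_zero (fun k => hausdorffDist_nonneg) hbound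
      have h1 : Tendsto (fun k:ℕ => 4 * sq * (2⁻¹:ℝ)^k) atTop (nhds 0) := by
        simpa using (tendsto_pow_atTop_nhds_zero_of_lt_one
          (by norm_num : (0:ℝ) ≤ 2⁻¹) (by norm_num)).const_mul (4*sq)
      have h2 : Tendsto (fun k:ℕ => 1/((k:ℝ)+1)) atTop (nhds 0) :=
        tendsto_one_div_add_atTop_nhds_zero_nat
      simpa using h1.add h2

end
end

section
/- There exists a nonempty compact set X ⊆ Q = [-1,1]^d that is locally rich: Tan(X,x) ≈ 𝒦 for every x ∈ X. -/
open Metric Set Filter Topology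

noncomputable section

namespace LocRich


lemma norm_le_sqrt_mul {d : ℕ} {x : Euc d} {r : ℝ} (hr : 0 ≤ r) (h : ∀ i, |x i| ≤ r) :
    ‖x‖ ≤ Real.sqrt d * r := by
  rw [EuclideanSpace.norm_eq]
  have h1 : ∑ i, ‖x i‖ ^ 2 ≤ (d : ℝ) * r ^ 2 := by
    calc ∑ i : Fin d, ‖x i‖ ^ 2 ≤ ∑ _i : Fin d, r ^ 2 := by
          refine Finset.sum_le_sum fun i _ => ?_
          have := h i
          rw [Real.norm_eq_abs]
          nlinarith [abs_nonneg (x i)]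
      _ = (d : ℝ) * r ^ 2 := by simp [Finset.sum_const, Finset.card_univ]
  calc Real.sqrt (∑ i, ‖x i‖ ^ 2) ≤ Real.sqrt ((d : ℝ) * r ^ 2) := Real.sqrt_le_sqrt h1
    _ = Real.sqrt d * r := by
        rw [Real.sqrt_mul (by positivity), Real.sqrt_sq hr]

lemma abs_coord_le_norm {d : ℕ} (x : Euc d) (i : Fin d) : |x i| ≤ ‖x‖ := by
  rw [EuclideanSpace.norm_eq]
  have : |x i| = Real.sqrt (‖x i‖ ^ 2) := by
    rw [Real.sqrt_sq_eq_abs, Real.norm_eq_abs, abs_abs]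
  rw [this]
  refine Real.sqrt_le_sqrt ?_
  exact Finset.single_le_sum (f := fun j => ‖x j‖ ^ 2) (fun j _ => by positivity) (Finset.mem_univ i)

lemma exists_coord {d : ℕ} (hd : 0 < d) (x : Euc d) : ∃ i, ‖x‖ ≤ Real.sqrt d * |x i| := by
  obtain ⟨i, -, hi⟩ := Finset.exists_max_image Finset.univ (fun i => |x i|)
    ⟨⟨0, hd⟩, Finset.mem_univ _⟩
  exact ⟨i, norm_le_sqrt_mul (abs_nonneg _) (fun j => hi j (Finset.mem_univ j))⟩

variable (d : ℕ)

def Hcube : Set (Euc d) := {x | ∀ i, |x i| ≤ 1/2}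

lemma Hcube_subset_cube : Hcube d ⊆ cube d := fun x hx i => by
  have := hx i; rw [Set.mem_Icc]; constructor <;> [linarith [abs_le.1 this]; linarith [abs_le.1 this]]

lemma Hcube_isCompact : IsCompact (Hcube d) := by
  refine (isCompact_closedBall (0 : Euc d) (Real.sqrt d * (1/2))).of_isClosed_subset ?_ ?_
  · have : Hcube d = ⋂ i, (fun x : Euc d => x i) ⁻¹' (Set.Icc (-(1/2)) (1/2)) := by
      ext x
      simp only [Hcube, Set.mem_setOf_eq, Set.mem_iInter, Set.mem_preimage, Set.mem_Icc, abs_le]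
    rw [this]
    exact isClosed_iInter fun i => isClosed_Icc.preimage (EuclideanSpace.proj (𝕜 := ℝ) i).continuous
  · intro x hx
    rw [mem_closedBall_zero_iff]
    exact norm_le_sqrt_mul (by norm_num) hx

def Drat : Set (Euc d) := {x | ∀ i, (∃ q : ℚ, x i = (q : ℝ)) ∧ |x i| ≤ 1/2}

lemma Drat_subset_Hcube : Drat d ⊆ Hcube d := fun x hx i => (hx i).2

lemma Drat_countable : (Drat d).Countable := by
  refine Set.Countable.mono ?_ (Set.countable_range
    (fun q : Fin d → ℚ => (WithLp.toLp 2 (fun i => (q i : ℝ)) : Euc d)))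
  intro x hx
  choose q hq using fun i => (hx i).1
  exact ⟨q, by ext i; exact (hq i).symm⟩

lemma zero_mem_Drat : (0 : Euc d) ∈ Drat d := fun i => by
  refine ⟨⟨0, by simp⟩, by simp⟩

def Fam : Set (Set (Euc d)) := {F | F.Finite ∧ F.Nonempty ∧ F ⊆ Drat d}

lemma Fam_countable : (Fam d).Countable :=
  Set.Countable.mono (fun F hF => Set.mem_setOf.2 ⟨hF.1, hF.2.2⟩)
    (Set.countable_setOf_finite_subset (Drat_countable d))

lemma Fam_nonempty : (Fam d).Nonempty :=
  ⟨{0}, Set.finite_singleton _, Set.singleton_nonempty _, by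
    simp only [Set.singleton_subset_iff]; exact zero_mem_Drat d⟩

def enum : ℕ → Set (Euc d) :=
  ((Fam_countable d).exists_eq_range (Fam_nonempty d)).choose

lemma range_enum : Fam d = Set.range (enum d) :=
  ((Fam_countable d).exists_eq_range (Fam_nonempty d)).choose_spec

lemma enum_mem (j : ℕ) : enum d j ∈ Fam d := by
  rw [range_enum]; exact ⟨j, rfl⟩

lemma enum_surj {F : Set (Euc d)} (hF : F ∈ Fam d) : ∃ j, enum d j = F := by
  rw [range_enum] at hF; obtain ⟨j, hj⟩ := hF; exact ⟨j, hj⟩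

def Pat (n : ℕ) : Set (Euc d) := enum d (Nat.unpair n).1

lemma Pat_mem (n : ℕ) : Pat d n ∈ Fam d := enum_mem d _
lemma Pat_finite (n : ℕ) : (Pat d n).Finite := (Pat_mem d n).1
lemma Pat_nonempty (n : ℕ) : (Pat d n).Nonempty := (Pat_mem d n).2.1
lemma Pat_subset (n : ℕ) : Pat d n ⊆ Hcube d := (Pat_mem d n).2.2.trans (Drat_subset_Hcube d)

lemma Pat_pair (j i : ℕ) : Pat d (Nat.pair j i) = enum d j := by
  simp [Pat, Nat.unpair_pair]


-- interface lemmas matching the names used across the development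
lemma Hcube_def (x : Euc d) : x ∈ Hcube d ↔ ∀ i, |x i| ≤ 1/2 := Iff.rfl
lemma Drat_def (x : Euc d) : x ∈ Drat d ↔ ∀ i, (∃ q : ℚ, x i = (q : ℝ)) ∧ |x i| ≤ 1/2 := Iff.rfl
lemma Fam_def (F : Set (Euc d)) : F ∈ Fam d ↔ F.Finite ∧ F.Nonempty ∧ F ⊆ Drat d := Iff.rfl
lemma exists_gap (F : Set (Euc d)) (hF : F.Finite) :
    ∃ δ : ℝ, 0 < δ ∧ ∀ p ∈ F, ∀ q ∈ F, p ≠ q → δ ≤ dist p q := by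
  classical
  set S := (fun pq : Euc d × Euc d => dist pq.1 pq.2) '' ((F ×ˢ F) ∩ {pq | pq.1 ≠ pq.2}) with hS
  have hfin : S.Finite := Set.Finite.image _ ((hF.prod hF).inter_of_left _)
  rcases S.eq_empty_or_nonempty with h | h
  · refine ⟨1, one_pos, fun p hp q hq hne => absurd ?_ (Set.not_nonempty_iff_eq_empty.2 h)⟩
    exact ⟨dist p q, ⟨(p, q), ⟨⟨hp, hq⟩, hne⟩, rfl⟩⟩
  · have hne : hfin.toFinset.Nonempty := by
      rwa [Set.Finite.toFinset_nonempty]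
    set δ := hfin.toFinset.min' hne with hδdef
    have hδS : δ ∈ S := by
      have := hfin.toFinset.min'_mem hne
      rwa [Set.Finite.mem_toFinset] at this
    obtain ⟨⟨a, b⟩, ⟨⟨-, -⟩, hab⟩, hd'⟩ := hδS
    refine ⟨δ, ?_, fun p hp q hq hpq => ?_⟩
    · rw [← hd']; exact dist_pos.2 hab
    · have hmem : dist p q ∈ hfin.toFinset := by
        rw [Set.Finite.mem_toFinset]
        exact ⟨(p, q), ⟨⟨hp, hq⟩, hpq⟩, rfl⟩
      exact hfin.toFinset.min'_le _ hmem

def gap (n : ℕ) : ℝ := (exists_gap d (Pat d n) (Pat_finite d n)).choose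

lemma gap_pos (n : ℕ) : 0 < gap d n := (exists_gap d (Pat d n) (Pat_finite d n)).choose_spec.1

lemma gap_le {n : ℕ} {p q : Euc d} (hp : p ∈ Pat d n) (hq : q ∈ Pat d n) (hpq : p ≠ q) :
    gap d n ≤ dist p q :=
  (exists_gap d (Pat d n) (Pat_finite d n)).choose_spec.2 p hp q hq hpq

def sc : ℕ → ℝ
  | 0 => 1/2
  | n + 1 => sc n * min ((1/2) ^ (n + 1)) (gap d n / (100 * (d + 1)))

lemma sc_pos (n : ℕ) : 0 < sc d n := by
  induction n with
  | zero => norm_num [sc]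
  | succ n ih =>
      rw [sc]
      exact mul_pos ih (lt_min (by positivity) (by
        have := gap_pos d n; positivity))

lemma sc_succ_le_half_pow (n : ℕ) : sc d (n + 1) ≤ sc d n * (1/2) ^ (n + 1) := by
  rw [sc]
  exact mul_le_mul_of_nonneg_left (min_le_left _ _) (sc_pos d n).le

lemma sc_succ_le_half (n : ℕ) : sc d (n + 1) ≤ sc d n * (1/2) := by
  refine (sc_succ_le_half_pow d n).trans ?_
  refine mul_le_mul_of_nonneg_left ?_ (sc_pos d n).le
  calc ((1:ℝ)/2) ^ (n+1) ≤ (1/2) ^ 1 := by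
        refine pow_le_pow_of_le_one (by norm_num) (by norm_num) (by omega)
    _ = 1/2 := pow_one _

lemma sc_gap (n : ℕ) : sc d (n + 1) * (100 * (d + 1)) ≤ sc d n * gap d n := by
  rw [sc, mul_assoc]
  refine mul_le_mul_of_nonneg_left ?_ (sc_pos d n).le
  have h : min ((1/2 : ℝ) ^ (n + 1)) (gap d n / (100 * (d + 1))) ≤ gap d n / (100 * (d + 1)) :=
    min_le_right _ _
  have hc : (0:ℝ) < 100 * (d + 1) := by positivity
  calc min ((1/2 : ℝ) ^ (n + 1)) (gap d n / (100 * (d + 1))) * (100 * (d + 1))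
      ≤ gap d n / (100 * (d + 1)) * (100 * (d + 1)) := by
        exact mul_le_mul_of_nonneg_right h hc.le
    _ = gap d n := by field_simp

lemma sc_strictAnti : StrictAnti (sc d) := by
  refine strictAnti_nat_of_succ_lt fun n => ?_
  have := sc_succ_le_half d n
  have h2 := sc_pos d n
  linarith

lemma sc_anti : Antitone (sc d) := (sc_strictAnti d).antitone

lemma sc_le_geom (n : ℕ) : sc d n ≤ (1/2) ^ (n + 1) := by
  induction n with
  | zero => norm_num [sc]
  | succ n ih =>
      calc sc d (n+1) ≤ sc d n * (1/2) := sc_succ_le_half d n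
        _ ≤ (1/2)^(n+1) * (1/2) := by
            exact mul_le_mul_of_nonneg_right ih (by norm_num)
        _ = (1/2)^(n+2) := by ring

lemma sc_add_le (n k : ℕ) : sc d (n + k) ≤ sc d n * (1/2) ^ k := by
  induction k with
  | zero => simp
  | succ k ih =>
      calc sc d (n + (k+1)) = sc d ((n + k) + 1) := by ring_nf
        _ ≤ sc d (n + k) * (1/2) := sc_succ_le_half d _
        _ ≤ sc d n * (1/2)^k * (1/2) := mul_le_mul_of_nonneg_right ih (by norm_num)
        _ = sc d n * (1/2)^(k+1) := by ring

lemma sc_summable : Summable (sc d) := by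
  refine Summable.of_nonneg_of_le (fun n => (sc_pos d n).le) (fun n => ?_)
    (summable_geometric_two.mul_left (1/2))
  calc sc d n ≤ (1/2:ℝ)^(n+1) := sc_le_geom d n
    _ = 1/2 * (1/2)^n := by ring
    _ = 1/2 * ((1:ℝ)/2)^n := rfl

lemma sc_tail_summable (N : ℕ) : Summable (fun k => sc d (N + k)) := by
  have := (summable_nat_add_iff N).2 (sc_summable d)
  simpa [add_comm] using this

lemma sc_tsum_tail_le (N : ℕ) : (∑' k, sc d (N + k)) ≤ 2 * sc d N := by
  have h1 : (∑' k, sc d (N + k)) ≤ ∑' k : ℕ, sc d N * (1/2) ^ k := by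
    refine Summable.tsum_le_tsum (fun k => sc_add_le d N k) (sc_tail_summable d N) ?_
    exact (summable_geometric_two).mul_left _
  calc (∑' k, sc d (N + k)) ≤ sc d N * ∑' k : ℕ, ((1:ℝ)/2) ^ k := by
        rw [← tsum_mul_left] at *; exact h1
    _ = sc d N * 2 := by rw [tsum_geometric_two]
    _ = 2 * sc d N := by ring


lemma sc_zero : sc d 0 = 1/2 := rfl
lemma norm_le_of_Hcube {x : Euc d} (hx : x ∈ Hcube d) : ‖x‖ ≤ Real.sqrt d * (1/2) :=
  norm_le_sqrt_mul (by norm_num) ((Hcube_def d x).1 hx)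

lemma norm_sub_le_of_Hcube {x y : Euc d} (hx : x ∈ Hcube d) (hy : y ∈ Hcube d) :
    ‖x - y‖ ≤ Real.sqrt d := by
  have : ∀ i, |(x - y) i| ≤ 1 := by
    intro i
    have h1 := ((Hcube_def d x).1 hx) i
    have h2 := ((Hcube_def d y).1 hy) i
    have : (x - y) i = x i - y i := rfl
    rw [this]
    calc |x i - y i| ≤ |x i| + |y i| := abs_sub _ _
      _ ≤ 1 := by linarith
  simpa using norm_le_sqrt_mul zero_le_one this

def DigSet : Set (ℕ → Euc d) := Set.pi Set.univ (fun n => Pat d n)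

def sumMap (p : ℕ → Euc d) : Euc d := ∑' n, sc d n • p n

def Xset : Set (Euc d) := sumMap d '' DigSet d

lemma dig_summable {p : ℕ → Euc d} (hp : ∀ n, p n ∈ Hcube d) :
    Summable (fun n => sc d n • p n) := by
  refine Summable.of_norm_bounded (g := fun n => sc d n * (Real.sqrt d * (1/2))) ?_ ?_
  · exact (sc_summable d).mul_right _
  · intro n
    rw [norm_smul, Real.norm_eq_abs, abs_of_pos (sc_pos d n)]
    exact mul_le_mul_of_nonneg_left (norm_le_of_Hcube d (hp n)) (sc_pos d n).le

lemma digset_mem_Hcube {p : ℕ → Euc d} (hp : p ∈ DigSet d) (n : ℕ) : p n ∈ Hcube d :=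
  Pat_subset d n (hp n (Set.mem_univ n))

lemma dig_summable' {p : ℕ → Euc d} (hp : p ∈ DigSet d) :
    Summable (fun n => sc d n • p n) := dig_summable d (digset_mem_Hcube d hp)

lemma Xset_isCompact : IsCompact (Xset d) := by
  have hK : IsCompact (DigSet d) :=
    isCompact_univ_pi (fun n => (Pat_finite d n).isCompact)
  refine hK.image_of_continuousOn ?_
  have hu : TendstoUniformlyOn (fun (t : Finset ℕ) (p : ℕ → Euc d) => ∑ n ∈ t, sc d n • p n)
      (fun p => ∑' n, sc d n • p n) atTop (DigSet d) := by
    refine tendstoUniformlyOn_tsum ((sc_summable d).mul_right (Real.sqrt d * (1/2))) ?_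
    intro n p hp
    rw [norm_smul, Real.norm_eq_abs, abs_of_pos (sc_pos d n)]
    exact mul_le_mul_of_nonneg_left (norm_le_of_Hcube d (digset_mem_Hcube d hp n)) (sc_pos d n).le
  refine hu.continuousOn (Filter.Eventually.of_forall fun t => ?_).frequently
  refine (continuous_finset_sum t (fun n _ => ?_)).continuousOn
  exact (continuous_apply n).const_smul (sc d n)


lemma Xset_nonempty : (Xset d).Nonempty := by
  refine ⟨sumMap d (fun n => (Pat_nonempty d n).choose), ?_⟩
  exact ⟨_, fun n _ => (Pat_nonempty d n).choose_spec, rfl⟩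

lemma Xset_subset_Hcube : Xset d ⊆ Hcube d := by
  rintro - ⟨p, hp, rfl⟩
  rw [Hcube_def]
  intro i
  have hsum := dig_summable' d hp
  have hx : (sumMap d p) i = ∑' n, sc d n * p n i := by
    have := ContinuousLinearMap.map_tsum (EuclideanSpace.proj (𝕜 := ℝ) i) hsum
    simpa [sumMap] using this
  rw [hx]
  have hb : ∀ n, ‖sc d n * p n i‖ ≤ sc d n * (1/2) := by
    intro n
    rw [Real.norm_eq_abs, abs_mul, abs_of_pos (sc_pos d n)]
    exact mul_le_mul_of_nonneg_left (((Hcube_def d _).1 (digset_mem_Hcube d hp n)) i)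
      (sc_pos d n).le
  have hsum2 : Summable (fun n => sc d n * p n i) :=
    Summable.of_norm_bounded ((sc_summable d).mul_right (1/2)) hb
  have h1 : |∑' n, sc d n * p n i| ≤ ∑' n, sc d n * (1/2) := by
    rw [← Real.norm_eq_abs]
    refine (norm_tsum_le_tsum_norm (by simpa [Real.norm_eq_abs, abs_mul] using hsum2.abs)).trans ?_
    refine Summable.tsum_le_tsum hb (by simpa [Real.norm_eq_abs, abs_mul] using hsum2.abs) ((sc_summable d).mul_right _)
  have h2 : ∑' n, sc d n * (1/2) ≤ (1:ℝ)/2 := by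
    rw [tsum_mul_right]
    have h3 : (∑' n, sc d n) ≤ 2 * sc d 0 := by
      have := sc_tsum_tail_le d 0
      simpa using this
    rw [sc_zero] at h3
    have h4 : (0:ℝ) ≤ ∑' n, sc d n := tsum_nonneg (fun n => (sc_pos d n).le)
    nlinarith
  linarith


lemma digset_mem {p : ℕ → Euc d} (hp : p ∈ DigSet d) (n : ℕ) : p n ∈ Pat d n :=
  hp n (Set.mem_univ n)

lemma Xset_mem {x : Euc d} (hx : x ∈ Xset d) : ∃ p ∈ DigSet d, sumMap d p = x := hx
lemma sqrt_le_succ : Real.sqrt d ≤ (d : ℝ) + 1 := by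
  have h1 : (d : ℝ) ≤ ((d : ℝ) + 1) ^ 2 := by nlinarith [(Nat.cast_nonneg d : (0:ℝ) ≤ d)]
  calc Real.sqrt d ≤ Real.sqrt (((d : ℝ) + 1) ^ 2) := Real.sqrt_le_sqrt h1
    _ = (d : ℝ) + 1 := Real.sqrt_sq (by positivity)

lemma diff_summable {p q : ℕ → Euc d} (hp : p ∈ DigSet d) (hq : q ∈ DigSet d) :
    Summable (fun n => sc d n • (q n - p n)) := by
  have := (dig_summable' d hq).sub (dig_summable' d hp)
  simpa [smul_sub] using this

lemma sumMap_sub {p q : ℕ → Euc d} (hp : p ∈ DigSet d) (hq : q ∈ DigSet d) :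
    sumMap d q - sumMap d p = ∑' n, sc d n • (q n - p n) := by
  rw [sumMap, sumMap, ← Summable.tsum_sub (dig_summable' d hq) (dig_summable' d hp)]
  congr 1; funext n; rw [smul_sub]

lemma tsum_decomp {f : ℕ → Euc d} (hf : Summable f) (M : ℕ) (h : ∀ n < M, f n = 0) :
    ∑' n, f n = f M + ∑' k, f (k + (M + 1)) := by
  have hdec := Summable.sum_add_tsum_nat_add (M + 1) hf
  rw [← hdec]
  congr 1
  rw [Finset.sum_eq_single M]
  · intro b hb hbM
    rcases lt_or_gt_of_ne hbM with h1 | h1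
    · exact h b h1
    · exact absurd (Finset.mem_range.1 hb) (by omega)
  · intro hM; exact absurd (Finset.mem_range.2 (by omega)) hM

lemma tail_norm_le {p q : ℕ → Euc d} (hp : p ∈ DigSet d) (hq : q ∈ DigSet d) (M : ℕ) :
    ‖∑' k, sc d (k + M) • (q (k + M) - p (k + M))‖ ≤ 2 * sc d M * Real.sqrt d := by
  have htails : Summable (fun k => sc d (k + M) • (q (k + M) - p (k + M))) :=
    (summable_nat_add_iff M).2 (diff_summable d hp hq)
  have hb : ∀ k, ‖sc d (k + M) • (q (k + M) - p (k + M))‖ ≤ sc d (k + M) * Real.sqrt d := by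
    intro k
    rw [norm_smul, Real.norm_eq_abs, abs_of_pos (sc_pos d _)]
    exact mul_le_mul_of_nonneg_left
      (norm_sub_le_of_Hcube d (digset_mem_Hcube d hq _) (digset_mem_Hcube d hp _))
      (sc_pos d _).le
  have hgs : Summable (fun k => sc d (k + M) * Real.sqrt d) :=
    ((summable_nat_add_iff M).2 (sc_summable d)).mul_right _
  refine (norm_tsum_le_tsum_norm (htails.norm)).trans ?_
  refine (Summable.tsum_le_tsum hb htails.norm hgs).trans ?_
  rw [tsum_mul_right]
  have h1 : (∑' k, sc d (k + M)) ≤ 2 * sc d M := by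
    have := sc_tsum_tail_le d M
    have heq : (∑' k, sc d (k + M)) = (∑' k, sc d (M + k)) := by
      congr 1; funext k; rw [add_comm]
    rw [heq]; exact this
  have hs : (0:ℝ) ≤ Real.sqrt d := Real.sqrt_nonneg _
  nlinarith

lemma zoom_close {p q : ℕ → Euc d} (hp : p ∈ DigSet d) (hq : q ∈ DigSet d) {N : ℕ}
    (h : ∀ n < N, q n = p n) :
    dist ((sc d N)⁻¹ • (sumMap d q - sumMap d p)) (q N - p N) ≤ Real.sqrt d * (1/2) ^ N := by
  set f := fun n => sc d n • (q n - p n) with hf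
  have hdec : sumMap d q - sumMap d p = f N + ∑' k, f (k + (N + 1)) := by
    rw [sumMap_sub d hp hq]
    exact tsum_decomp d (diff_summable d hp hq) N (fun n hn => by
      simp [hf, h n hn])
  have hscN := sc_pos d N
  have hy : (sc d N)⁻¹ • (sumMap d q - sumMap d p)
      = (q N - p N) + (sc d N)⁻¹ • ∑' k, f (k + (N + 1)) := by
    rw [hdec, smul_add, hf]
    simp only []
    rw [inv_smul_smul₀ (ne_of_gt hscN)]
  rw [hy, dist_eq_norm]
  have : q N - p N + (sc d N)⁻¹ • ∑' k, f (k + (N + 1)) - (q N - p N)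
      = (sc d N)⁻¹ • ∑' k, f (k + (N + 1)) := by abel
  rw [this, norm_smul, Real.norm_eq_abs, abs_of_pos (inv_pos.2 hscN)]
  have htail : ‖∑' k, f (k + (N + 1))‖ ≤ 2 * sc d (N + 1) * Real.sqrt d :=
    tail_norm_le d hp hq (N + 1)
  have hsc1 : sc d (N + 1) ≤ sc d N * (1/2) ^ (N + 1) := sc_succ_le_half_pow d N
  have hs : (0:ℝ) ≤ Real.sqrt d := Real.sqrt_nonneg _
  calc (sc d N)⁻¹ * ‖∑' k, f (k + (N + 1))‖
      ≤ (sc d N)⁻¹ * (2 * (sc d N * (1/2) ^ (N + 1)) * Real.sqrt d) := by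
        refine mul_le_mul_of_nonneg_left (htail.trans ?_) (inv_pos.2 hscN).le
        nlinarith
    _ = Real.sqrt d * (1/2) ^ N := by
        field_simp
        ring

lemma zoom_far {p q : ℕ → Euc d} (hd : 0 < d) (hp : p ∈ DigSet d) (hq : q ∈ DigSet d) {N : ℕ}
    (h : ∃ n, n < N ∧ q n ≠ p n) :
    (sc d N)⁻¹ • (sumMap d q - sumMap d p) ∉ cube d := by
  classical
  have hex : ∃ n, q n ≠ p n := ⟨h.choose, h.choose_spec.2⟩
  set k := Nat.find hex with hk
  have hqk : q k ≠ p k := Nat.find_spec hex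
  have hkN : k < N := lt_of_le_of_lt (Nat.find_min' hex h.choose_spec.2) h.choose_spec.1
  have hzero : ∀ m < k, q m = p m := fun m hm => by
    by_contra hne
    exact absurd (Nat.find_min' hex hne) (by omega)
  set f := fun n => sc d n • (q n - p n) with hf
  have hdec : sumMap d q - sumMap d p = f k + ∑' j, f (j + (k + 1)) := by
    rw [sumMap_sub d hp hq]
    exact tsum_decomp d (diff_summable d hp hq) k (fun n hn => by simp [hf, hzero n hn])
  have hfk : sc d k * gap d k ≤ ‖f k‖ := by
    rw [hf]
    simp only []
    rw [norm_smul, Real.norm_eq_abs, abs_of_pos (sc_pos d k)]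
    refine mul_le_mul_of_nonneg_left ?_ (sc_pos d k).le
    rw [← dist_eq_norm]
    exact gap_le d (hq k (Set.mem_univ k)) (hp k (Set.mem_univ k)) hqk
  have htail : ‖∑' j, f (j + (k + 1))‖ ≤ 2 * sc d (k + 1) * Real.sqrt d :=
    tail_norm_le d hp hq (k + 1)
  have hT : 98 * ((d : ℝ) + 1) * sc d (k + 1) ≤ ‖sumMap d q - sumMap d p‖ := by
    rw [hdec]
    have h1 : ‖f k‖ - ‖∑' j, f (j + (k + 1))‖ ≤ ‖f k + ∑' j, f (j + (k + 1))‖ := by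
      have := norm_sub_norm_le (f k) (-(∑' j, f (j + (k + 1))))
      simpa [sub_neg_eq_add] using this
    have h2 := sc_gap d k
    have h3 : Real.sqrt d ≤ (d : ℝ) + 1 := sqrt_le_succ d
    have h4 := (sc_pos d (k + 1))
    nlinarith
  intro hcube
  set y := (sc d N)⁻¹ • (sumMap d q - sumMap d p) with hy
  have hy1 : ∀ i, |y i| ≤ 1 := by
    intro i
    have := hcube i
    rw [Set.mem_Icc] at this
    exact abs_le.2 this
  have hynorm : ‖y‖ ≤ Real.sqrt d := by
    simpa using norm_le_sqrt_mul zero_le_one hy1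
  have hyge : 98 * ((d : ℝ) + 1) ≤ ‖y‖ := by
    rw [hy, norm_smul, Real.norm_eq_abs, abs_of_pos (inv_pos.2 (sc_pos d N))]
    have hle : sc d N ≤ sc d (k + 1) := sc_anti d (by omega)
    have h5 := sc_pos d N
    have h6 := sc_pos d (k + 1)
    calc (98 : ℝ) * ((d : ℝ) + 1) = (sc d (k+1))⁻¹ * (98 * ((d : ℝ) + 1) * sc d (k+1)) := by
          field_simp
      _ ≤ (sc d N)⁻¹ * (98 * ((d : ℝ) + 1) * sc d (k+1)) := by
          refine mul_le_mul_of_nonneg_right ?_ (by positivity)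
          exact one_div_le_one_div_of_le h5 hle |>.trans_eq (by rw [one_div]) |>.trans_eq' (by rw [one_div])
      _ ≤ (sc d N)⁻¹ * ‖sumMap d q - sumMap d p‖ := by
          exact mul_le_mul_of_nonneg_left hT (by positivity)
  have h3 : Real.sqrt d ≤ (d : ℝ) + 1 := sqrt_le_succ d
  have : (0:ℝ) < (d:ℝ) + 1 := by positivity
  nlinarith

lemma mem_zoom {p : ℕ → Euc d} (hp : p ∈ DigSet d) {N : ℕ} {w : Euc d} (hw : w ∈ Pat d N) :
    w - p N ∈ zoom d (sumMap d p) (sc d N) (Xset d) := by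
  classical
  set q := Function.update p N w with hqdef
  have hq : q ∈ DigSet d := by
    intro n _
    rcases eq_or_ne n N with rfl | hne
    · simpa [hqdef] using hw
    · rw [hqdef, Function.update_of_ne hne]
      exact hp n (Set.mem_univ n)
  have hsub : sumMap d q - sumMap d p = sc d N • (w - p N) := by
    rw [sumMap_sub d hp hq]
    rw [tsum_eq_single N]
    · simp [hqdef]
    · intro n hn
      rw [hqdef, Function.update_of_ne hn, sub_self, smul_zero]
  constructor
  · refine ⟨sumMap d q, ⟨q, hq, rfl⟩, ?_⟩
    show (sc d N)⁻¹ • (sumMap d q - sumMap d p) = w - p N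
    rw [hsub, inv_smul_smul₀ (ne_of_gt (sc_pos d N))]
  · intro i
    have h1 := ((Hcube_def d w).1 (Pat_subset d N hw)) i
    have h2 := ((Hcube_def d (p N)).1 (digset_mem_Hcube d hp N)) i
    have : (w - p N) i = w i - p N i := rfl
    rw [Set.mem_Icc, this]
    constructor <;> [linarith [abs_le.1 h1, abs_le.1 h2]; linarith [abs_le.1 h1, abs_le.1 h2]]

lemma zoom_hausdorff (hd : 0 < d) {p : ℕ → Euc d} (hp : p ∈ DigSet d) (N : ℕ) :
    hausdorffDist (zoom d (sumMap d p) (sc d N) (Xset d)) ((fun y => y - p N) '' Pat d N)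
      ≤ Real.sqrt d * (1/2) ^ N := by
  refine hausdorffDist_le_of_mem_dist (by positivity) ?_ ?_
  · rintro y ⟨⟨z, ⟨q, hq, rfl⟩, rfl⟩, hycube⟩
    by_cases hcase : ∀ n < N, q n = p n
    · exact ⟨q N - p N, ⟨q N, hq N (Set.mem_univ N), rfl⟩, zoom_close d hp hq hcase⟩
    · push_neg at hcase
      obtain ⟨n, hn1, hn2⟩ := hcase
      exact absurd hycube (zoom_far d hd hp hq ⟨n, hn1, hn2⟩)
  · rintro y ⟨w, hw, rfl⟩
    exact ⟨w - p N, mem_zoom d hp hw, by simp⟩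

lemma ratapprox {x : Euc d} (hx : x ∈ Hcube d) {ε : ℝ} (hε : 0 < ε) :
    ∃ y ∈ Drat d, dist x y ≤ ε := by
  set ε' := ε / (Real.sqrt d + 1) with hε'def
  have hsd : (0:ℝ) < Real.sqrt d + 1 := by positivity
  have hε' : 0 < ε' := by positivity
  have hcoord : ∀ i : Fin d, ∃ q : ℚ, |(q : ℝ)| ≤ 1/2 ∧ |x i - q| ≤ ε' := by
    intro i
    have hxi := (Hcube_def d x).1 hx i
    obtain ⟨hxi1, hxi2⟩ := abs_le.1 hxi
    have hLR : max (-(1/2)) (x i - ε') < min (1/2) (x i + ε') := by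
      refine max_lt (lt_min (by norm_num) (by linarith)) (lt_min (by linarith) (by linarith))
    obtain ⟨q, hq1, hq2⟩ := exists_rat_btwn hLR
    have hq1a : -(1/2 : ℝ) < (q:ℝ) := lt_of_le_of_lt (le_max_left _ _) hq1
    have hq1b : (x i - ε') < (q:ℝ) := lt_of_le_of_lt (le_max_right _ _) hq1
    have hq2a : (q:ℝ) < 1/2 := lt_of_lt_of_le hq2 (min_le_left _ _)
    have hq2b : (q:ℝ) < x i + ε' := lt_of_lt_of_le hq2 (min_le_right _ _)
    exact ⟨q, abs_le.2 ⟨by linarith, by linarith⟩, abs_le.2 ⟨by linarith, by linarith⟩⟩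
  choose q hq1 hq2 using hcoord
  set y : Euc d := WithLp.toLp 2 (fun i => (q i : ℝ)) with hydef
  refine ⟨y, (Drat_def d _).2 (fun i => ⟨⟨q i, rfl⟩, hq1 i⟩), ?_⟩
  rw [dist_eq_norm]
  have hb : ∀ i, |(x - y) i| ≤ ε' := fun i => hq2 i
  calc ‖x - y‖ ≤ Real.sqrt d * ε' := norm_le_sqrt_mul hε'.le hb
    _ ≤ ε := by
        rw [hε'def, ← mul_div_assoc, div_le_iff₀ hsd]
        nlinarith [Real.sqrt_nonneg (d:ℝ), hε.le]

lemma enum_dense {C : Set (Euc d)} (hCc : IsCompact C) (hCne : C.Nonempty) (hCH : C ⊆ Hcube d)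
    {ε : ℝ} (hε : 0 < ε) : ∃ j, hausdorffDist (enum d j) C ≤ ε := by
  obtain ⟨T, hTC, hTfin, hTcover⟩ := hCc.finite_cover_balls (half_pos hε)
  have hT : ∀ t ∈ T, ∃ y ∈ Drat d, dist t y ≤ ε/2 := fun t ht =>
    ratapprox d (hCH (hTC ht)) (half_pos hε)
  choose! r hr1 hr2 using hT
  have hTne : T.Nonempty := by
    obtain ⟨c, hc⟩ := hCne
    obtain ⟨t, ht, -⟩ := Set.mem_iUnion₂.1 (hTcover hc)
    exact ⟨t, ht⟩
  have hF : (r '' T) ∈ Fam d := (Fam_def d _).2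
    ⟨hTfin.image r, hTne.image r, by rintro - ⟨t, ht, rfl⟩; exact hr1 t ht⟩
  obtain ⟨j, hj⟩ := enum_surj d hF
  refine ⟨j, ?_⟩
  rw [hj]
  refine hausdorffDist_le_of_mem_dist hε.le ?_ ?_
  · rintro - ⟨t, ht, rfl⟩
    exact ⟨t, hTC ht, by rw [dist_comm]; linarith [hr2 t ht]⟩
  · intro c hc
    obtain ⟨t, ht, hct⟩ := Set.mem_iUnion₂.1 (hTcover hc)
    refine ⟨r t, ⟨t, ht, rfl⟩, ?_⟩
    have h1 : dist c t < ε/2 := mem_ball.1 hct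
    calc dist c (r t) ≤ dist c t + dist t (r t) := dist_triangle _ _ _
      _ ≤ ε := by linarith [hr2 t ht]

lemma hd_translate (A B : Set (Euc d)) (v : Euc d) :
    hausdorffDist ((fun y => y - v) '' A) ((fun y => y - v) '' B) = hausdorffDist A B :=
  hausdorffDist_image (Isometry.of_dist_eq (fun a b => dist_sub_right a b v))

lemma hd_shift {C : Set (Euc d)} (u v : Euc d) :
    hausdorffDist ((fun y => y - u) '' C) ((fun y => y - v) '' C) ≤ dist u v := by
  rcases C.eq_empty_or_nonempty with rfl | hC
  · simpa [hausdorffDist] using dist_nonneg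
  refine hausdorffDist_le_of_mem_dist dist_nonneg ?_ ?_ <;> rintro - ⟨c, hc, rfl⟩
  · refine ⟨c - v, ⟨c, hc, rfl⟩, le_of_eq ?_⟩
    rw [dist_eq_norm]
    have h1 : c - u - (c - v) = v - u := by abel
    rw [h1, ← dist_eq_norm, dist_comm]
  · refine ⟨c - u, ⟨c, hc, rfl⟩, le_of_eq ?_⟩
    rw [dist_eq_norm]
    have h1 : c - v - (c - u) = u - v := by abel
    rw [h1, ← dist_eq_norm]

lemma cube_isBounded : Bornology.IsBounded (cube d) := by
  have hsub : cube d ⊆ closedBall (0 : Euc d) (Real.sqrt d * 1) := by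
    intro x hx
    rw [mem_closedBall_zero_iff]
    exact norm_le_sqrt_mul zero_le_one (fun i => abs_le.2 ⟨(hx i).1, (hx i).2⟩)
  exact (Metric.isBounded_closedBall).subset hsub

lemma exists_tangent (hd : 0 < d) {x : Euc d} (hx : x ∈ Xset d) {C : Set (Euc d)}
    (hCc : IsCompact C) (hCne : C.Nonempty) (hCH : C ⊆ Hcube d) :
    ∃ a ∈ C, IsTangentSet d (Xset d) x ((fun y => y - a) '' C) := by
  obtain ⟨p, hp, rfl⟩ := Xset_mem d hx
  have hjex : ∀ i : ℕ, ∃ j, hausdorffDist (enum d j) C ≤ 1/(i+1) :=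
    fun i => enum_dense d hCc hCne hCH (by positivity)
  choose j hj using hjex
  obtain ⟨N, hNmono, hPatN⟩ : ∃ N : ℕ → ℕ, StrictMono N ∧ ∀ i, Pat d (N i) = enum d (j i) := by
    refine ⟨fun i => Nat.rec (Nat.pair (j 0) 0) (fun i Ni => Nat.pair (j (i+1)) (Ni + 1)) i,
      strictMono_nat_of_lt_succ (fun i => ?_), fun i => ?_⟩
    · exact lt_of_lt_of_le (Nat.lt_succ_self _) (Nat.right_le_pair _ _)
    · cases i with
      | zero => exact Pat_pair d _ _
      | succ i => exact Pat_pair d _ _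
  have hpN : ∀ i, p (N i) ∈ Hcube d := fun i => digset_mem_Hcube d hp _
  obtain ⟨a, haH, φ, hφ, hconv⟩ := (Hcube_isCompact d).tendsto_subseq hpN
  have hedist : ∀ i, EMetric.hausdorffEdist (Pat d (N i)) C ≠ ⊤ := fun i =>
    hausdorffEdist_ne_top_of_nonempty_of_bounded (Pat_nonempty d _) hCne
      (Pat_finite d _).isBounded hCc.isBounded
  have hinf : ∀ i, infDist (p (N i)) C ≤ 1/(i+1) := fun i =>
    (infDist_le_hausdorffDist_of_mem (digset_mem d hp (N i)) (hedist i)).trans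
      (by rw [hPatN]; exact hj i)
  have hainC : a ∈ C := by
    have h0 : Tendsto (fun i => infDist (p (N (φ i))) C) atTop (𝓝 (infDist a C)) := by
      exact ((continuous_infDist_pt C).tendsto a).comp hconv
    have h1 : Tendsto (fun i => infDist (p (N (φ i))) C) atTop (𝓝 0) := by
      refine squeeze_zero (fun i => infDist_nonneg) (fun i => ?_)
        tendsto_one_div_add_atTop_nhds_zero_nat
      calc infDist (p (N (φ i))) C ≤ 1/(φ i + 1) := hinf (φ i)
        _ ≤ 1/(i+1) := by
            have h2 : (i : ℝ) + 1 ≤ (φ i : ℝ) + 1 := by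
              have h3 : i ≤ φ i := hφ.le_apply
              have h4 := (Nat.cast_le (α := ℝ)).2 h3
              linarith
            exact one_div_le_one_div_of_le (by positivity) h2
    have := tendsto_nhds_unique h0 h1
    exact (hCc.isClosed.mem_iff_infDist_zero hCne).2 this
  refine ⟨a, hainC, ?_, fun i => sc d (N (φ i)), fun i => sc_pos d _, ?_, ?_, ?_⟩
  · -- IsKSet
    refine ⟨hCne.image _, hCc.image (continuous_id.sub continuous_const), ?_⟩
    rintro - ⟨c, hc, rfl⟩
    intro i
    have h1 := (Hcube_def d c).1 (hCH hc) i
    have h2 := (Hcube_def d a).1 haH i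
    have h3 : (fun y => y - a) c i = c i - a i := rfl
    rw [Set.mem_Icc, h3]
    constructor <;> [linarith [abs_le.1 h1, abs_le.1 h2]; linarith [abs_le.1 h1, abs_le.1 h2]]
  · -- StrictAnti
    intro m n hmn
    exact sc_strictAnti d (hNmono (hφ hmn))
  · -- Tendsto t 0
    have hN0 : Tendsto (fun i => N (φ i)) atTop atTop := (hNmono.comp hφ).tendsto_atTop
    have h1 : Tendsto (fun n : ℕ => ((1:ℝ)/2) ^ n) atTop (𝓝 0) :=
      tendsto_pow_atTop_nhds_zero_of_lt_one (by norm_num) (by norm_num)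
    have hpow : Tendsto (fun i => ((1:ℝ)/2) ^ (N (φ i))) atTop (𝓝 0) := h1.comp hN0
    refine squeeze_zero (fun i => (sc_pos d _).le) (fun i => ?_) hpow
    refine (sc_le_geom d _).trans ?_
    refine pow_le_pow_of_le_one (by norm_num) (by norm_num) (by omega)
  · -- main convergence
    have hN0 : Tendsto (fun i => N (φ i)) atTop atTop := (hNmono.comp hφ).tendsto_atTop
    set F := (fun y => y - a) '' C with hF
    set G : ℕ → Set (Euc d) := fun i => (fun y => y - p (N (φ i))) '' Pat d (N (φ i)) with hG
    set Cp : ℕ → Set (Euc d) := fun i => (fun y => y - p (N (φ i))) '' C with hCp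
    have hji : ∀ i : ℕ, hausdorffDist (Pat d (N (φ i))) C ≤ 1/(i+1) := by
      intro i
      rw [hPatN]
      refine (hj (φ i)).trans ?_
      have h3 : i ≤ φ i := hφ.le_apply
      have h4 := (Nat.cast_le (α := ℝ)).2 h3
      exact one_div_le_one_div_of_le (by positivity) (by linarith)
    have hzne : ∀ i, (zoom d (sumMap d p) (sc d (N (φ i))) (Xset d)).Nonempty := fun i =>
      ⟨p (N (φ i)) - p (N (φ i)), mem_zoom d hp (digset_mem d hp _)⟩
    have hzb : ∀ i, Bornology.IsBounded (zoom d (sumMap d p) (sc d (N (φ i))) (Xset d)) :=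
      fun i => (cube_isBounded d).subset Set.inter_subset_right
    have hGne : ∀ i, (G i).Nonempty := fun i => (Pat_nonempty d _).image _
    have hGb : ∀ i, Bornology.IsBounded (G i) := fun i => ((Pat_finite d _).image _).isBounded
    have hCpne : ∀ i, (Cp i).Nonempty := fun i => hCne.image _
    have hCpb : ∀ i, Bornology.IsBounded (Cp i) := fun i =>
      ((hCc.image (continuous_id.sub continuous_const)).isBounded)
    have hFne : F.Nonempty := hCne.image _
    have hFb : Bornology.IsBounded F := (hCc.image (continuous_id.sub continuous_const)).isBounded
    have key : ∀ i, hausdorffDist (zoom d (sumMap d p) (sc d (N (φ i))) (Xset d)) F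
        ≤ Real.sqrt d * (1/2) ^ (N (φ i)) + (1/(i+1) + dist (p (N (φ i))) a) := by
      intro i
      have t1 := zoom_hausdorff d hd hp (N (φ i))
      have t2 : hausdorffDist (G i) (Cp i) ≤ 1/(i+1) := by
        rw [hG, hCp]
        simp only []
        rw [hd_translate]
        exact hji i
      have t3 : hausdorffDist (Cp i) F ≤ dist (p (N (φ i))) a := hd_shift d _ _
      have fin1 : EMetric.hausdorffEdist (zoom d (sumMap d p) (sc d (N (φ i))) (Xset d)) (G i) ≠ ⊤ :=
        hausdorffEdist_ne_top_of_nonempty_of_bounded (hzne i) (hGne i) (hzb i) (hGb i)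
      have fin2 : EMetric.hausdorffEdist (G i) (Cp i) ≠ ⊤ :=
        hausdorffEdist_ne_top_of_nonempty_of_bounded (hGne i) (hCpne i) (hGb i) (hCpb i)
      calc hausdorffDist (zoom d (sumMap d p) (sc d (N (φ i))) (Xset d)) F
          ≤ hausdorffDist (zoom d (sumMap d p) (sc d (N (φ i))) (Xset d)) (G i)
            + hausdorffDist (G i) F := hausdorffDist_triangle fin1
        _ ≤ hausdorffDist (zoom d (sumMap d p) (sc d (N (φ i))) (Xset d)) (G i)
            + (hausdorffDist (G i) (Cp i) + hausdorffDist (Cp i) F) := by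
              linarith [hausdorffDist_triangle (u := F) fin2]
        _ ≤ Real.sqrt d * (1/2) ^ (N (φ i)) + (1/(i+1) + dist (p (N (φ i))) a) := by
              linarith [t1, t2, t3]
    refine squeeze_zero (fun i => hausdorffDist_nonneg) key ?_
    have h1 : Tendsto (fun n : ℕ => ((1:ℝ)/2) ^ n) atTop (𝓝 0) :=
      tendsto_pow_atTop_nhds_zero_of_lt_one (by norm_num) (by norm_num)
    have hA : Tendsto (fun i => Real.sqrt d * ((1:ℝ)/2) ^ (N (φ i))) atTop (𝓝 0) := by
      have := (h1.comp hN0).const_mul (Real.sqrt d)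
      simpa using this
    have hB : Tendsto (fun i : ℕ => 1/((i:ℝ)+1)) atTop (𝓝 0) :=
      tendsto_one_div_add_atTop_nhds_zero_nat
    have hC : Tendsto (fun i => dist (p (N (φ i))) a) atTop (𝓝 0) := by
      have := tendsto_iff_dist_tendsto_zero.1 hconv
      simpa [Function.comp] using this
    have := hA.add (hB.add hC)
    simpa using this

lemma subcoll_easy (A : Set (Euc d)) (x : Euc d) :
    SubColl d (Tangents d A x) (KColl d) := by
  refine ⟨1/2, by norm_num, fun F hF => ?_⟩
  obtain ⟨f0, hf0⟩ := hF.1.1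
  refine ⟨F, hF.1, 1, by norm_num, by norm_num, f0, hf0, f0, hf0, ?_⟩
  simp only [one_smul]

lemma subcoll_hard (hd : 0 < d) {x : Euc d} (hx : x ∈ Xset d) :
    SubColl d (KColl d) (Tangents d (Xset d) x) := by
  refine ⟨1/8, by norm_num, fun K hK => ?_⟩
  obtain ⟨hKne, hKc, hKcube⟩ := hK
  obtain ⟨k0, hk0⟩ := hKne
  set C := (fun y => (4:ℝ)⁻¹ • (y - k0)) '' K with hCdef
  have hCc : IsCompact C := hKc.image (by fun_prop)
  have hCne : C.Nonempty := ⟨_, ⟨k0, hk0, rfl⟩⟩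
  have hCH : C ⊆ Hcube d := by
    rintro - ⟨y, hy, rfl⟩
    rw [Hcube_def]
    intro i
    have h1 := hKcube hy i
    have h2 := hKcube hk0 i
    rw [Set.mem_Icc] at h1 h2
    have h3 : ((fun y => (4:ℝ)⁻¹ • (y - k0)) y) i = 4⁻¹ * (y i - k0 i) := rfl
    rw [h3, abs_mul, abs_of_pos (by norm_num : (0:ℝ) < 4⁻¹)]
    have h4 : |y i - k0 i| ≤ 2 := abs_le.2 ⟨by linarith [h1.1, h2.2], by linarith [h1.2, h2.1]⟩
    nlinarith
  obtain ⟨a, haC, htan⟩ := exists_tangent d hd hx hCc hCne hCH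
  obtain ⟨ka, hka, hkaeq⟩ := haC
  refine ⟨(fun y => y - a) '' C, htan, 4⁻¹, by norm_num, by norm_num, ka, hka, 0,
    ⟨a, ⟨ka, hka, hkaeq⟩, sub_self a⟩, ?_⟩
  have heq : ∀ y : Euc d, (4:ℝ)⁻¹ • (y - ka) = (fun z => z - a) ((fun z => (4:ℝ)⁻¹ • (z - k0)) y) := by
    intro y
    have h4 : (4:ℝ)⁻¹ • (ka - k0) = a := hkaeq
    simp only []
    rw [← h4, ← smul_sub]
    congr 1
    abel
  calc (fun y => (4:ℝ)⁻¹ • (y - ka)) '' K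
      = ((fun z => z - a) ∘ (fun z => (4:ℝ)⁻¹ • (z - k0))) '' K := by
        exact Set.image_congr' heq
    _ = (fun z => z - a) '' C := by rw [hCdef, Set.image_comp]
    _ = (fun y => y - 0) '' ((fun y => y - a) '' C) := by
        have h5 : (fun y : Euc d => y - 0) = id := by funext y; simp
        rw [h5, Set.image_id]


end LocRich

/-- There exists a locally rich compact set `X ⊆ Q`: `Tan(X,x) ≈ 𝒦` for every `x ∈ X`. -/
theorem exists_locally_rich_compact_set (d : ℕ) (hd : 0 < d) :
    ∃ X : Set (Euc d), IsKSet d X ∧ ∀ x ∈ X, ApproxColl d (Tangents d X x) (KColl d) := by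
  refine ⟨LocRich.Xset d, ⟨LocRich.Xset_nonempty d, LocRich.Xset_isCompact d,
    (LocRich.Xset_subset_Hcube d).trans (LocRich.Hcube_subset_cube d)⟩, fun x hx => ?_⟩
  exact ⟨LocRich.subcoll_easy d _ x, LocRich.subcoll_hard d hd hx⟩

end
end

section
/- A typical compact set of 𝒦 has zero lower Minkowski (box-counting) dimension: the set of E ∈ 𝒦 satisfying liminf_{ε→0⁺} log N(E,ε) / (−log ε) = 0, where N(E,ε) is the minimal number of closed balls of radius ε needed to cover E, has meagre complement in (𝒦, d_H). -/
open Metric Set Filter Topology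

noncomputable section

/-- `N(A, ε)`: the minimal number of closed balls of radius `ε` needed to cover `A`. -/
noncomputable def coverNum (d : ℕ) (A : Set (Euc d)) (ε : ℝ) : ℕ :=
  sInf {n : ℕ | ∃ s : Finset (Euc d), s.card = n ∧ A ⊆ ⋃ y ∈ s, closedBall y ε}

/-- The lower Minkowski (box-counting) dimension,
`liminf_{ε → 0⁺} log N(A,ε) / (- log ε)`. -/
noncomputable def lowerMinkowskiDim (d : ℕ) (A : Set (Euc d)) : ℝ :=
  liminf (fun ε : ℝ => Real.log (coverNum d A ε) / (- Real.log ε)) (nhdsWithin 0 (Set.Ioi 0))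

namespace MinkTest

lemma coverNum_le {d : ℕ} {A : Set (Euc d)} {ε : ℝ} {s : Finset (Euc d)}
    (h : A ⊆ ⋃ y ∈ s, closedBall y ε) : coverNum d A ε ≤ s.card :=
  Nat.sInf_le ⟨s, rfl, h⟩

/-- The good open set in the space of nonempty compacts. -/
def V (d m : ℕ) : Set (TopologicalSpace.NonemptyCompacts (Euc d)) :=
  {K | ∃ ε : ℝ, 0 < ε ∧ ε < 1 / (m + 1) ∧ ∃ s : Finset (Euc d),
    (K : Set (Euc d)) ⊆ (⋃ y ∈ s, ball y ε) ∧
    Real.log s.card / (-Real.log ε) < 1 / (m + 1)}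

lemma isOpen_V (d m : ℕ) : IsOpen (V d m) := by
  rw [Metric.isOpen_iff]
  rintro K ⟨ε, hε, hε1, s, hcov, hlog⟩
  obtain ⟨δ, hδ, hδsub⟩ := K.isCompact.exists_thickening_subset_open
    (isOpen_biUnion fun y _ => isOpen_ball) hcov
  refine ⟨δ, hδ, fun K' hK' => ⟨ε, hε, hε1, s, ?_, hlog⟩⟩
  refine subset_trans (fun x hx => ?_) hδsub
  rw [Metric.mem_thickening_iff_infDist_lt K.nonempty]
  calc infDist x (K : Set (Euc d)) ≤ hausdorffDist (K' : Set (Euc d)) K :=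
        infDist_le_hausdorffDist_of_mem hx
          (hausdorffEdist_ne_top_of_nonempty_of_bounded K'.nonempty K.nonempty
            K'.isCompact.isBounded K.isCompact.isBounded)
    _ < δ := hK'

lemma dense_V (d m : ℕ) :
    Dense {K : {K : TopologicalSpace.NonemptyCompacts (Euc d) // (K : Set (Euc d)) ⊆ cube d} |
      K.1 ∈ V d m} := by
  rw [Metric.dense_iff]
  intro K r hr
  obtain ⟨t, hts, htf, htcov⟩ := K.1.isCompact.finite_cover_balls (half_pos hr)
  have htne : t.Nonempty := by
    obtain ⟨x, hx⟩ := K.1.nonempty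
    obtain ⟨y, hy, -⟩ := mem_iUnion₂.mp (htcov hx)
    exact ⟨y, hy⟩
  set F : Finset (Euc d) := htf.toFinset with hF
  have hFc : (F : Set (Euc d)) = t := htf.coe_toFinset
  set L : ℝ := Real.log F.card with hL
  have hL0 : 0 ≤ L := Real.log_natCast_nonneg _
  set ε : ℝ := min (1 / (m + 2)) (Real.exp (-((m + 1) * (L + 1)))) with hε
  have hεpos : 0 < ε := lt_min (by positivity) (Real.exp_pos _)
  have hε1 : ε < 1 / (m + 1) := by
    refine lt_of_le_of_lt (min_le_left _ _) ?_
    apply one_div_lt_one_div_of_lt <;> [positivity; norm_num]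
  have hD : (m + 1 : ℝ) * (L + 1) ≤ -Real.log ε := by
    have := Real.log_le_log hεpos (min_le_right _ _)
    rw [Real.log_exp] at this
    linarith
  have hDpos : (0 : ℝ) < -Real.log ε := lt_of_lt_of_le (by positivity) hD
  set K' : {K : TopologicalSpace.NonemptyCompacts (Euc d) // (K : Set (Euc d)) ⊆ cube d} :=
    ⟨⟨⟨t, htf.isCompact⟩, htne⟩, hts.trans K.2⟩ with hK'
  refine ⟨K', ?_, ⟨ε, hεpos, hε1, F, ?_, ?_⟩⟩
  · rw [mem_ball, Subtype.dist_eq, Metric.NonemptyCompacts.dist_eq]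
    have : hausdorffDist (K'.1 : Set (Euc d)) (K.1 : Set (Euc d)) ≤ r / 2 := by
      apply hausdorffDist_le_of_mem_dist (le_of_lt (half_pos hr))
      · intro x hx
        exact ⟨x, hts hx, by simpa using (half_pos hr).le⟩
      · intro x hx
        obtain ⟨y, hy, hxy⟩ := mem_iUnion₂.mp (htcov hx)
        exact ⟨y, hy, le_of_lt (mem_ball.mp hxy)⟩
    linarith
  · intro x hx
    exact mem_iUnion₂.mpr ⟨x, htf.mem_toFinset.mpr hx, mem_ball_self hεpos⟩
  · rw [div_lt_div_iff₀ hDpos (by positivity : (0:ℝ) < ((m:ℝ)+1))]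
    nlinarith [hD, hL0]

lemma dim_zero {d : ℕ} {K : TopologicalSpace.NonemptyCompacts (Euc d)}
    (h : ∀ m : ℕ, K ∈ V d m) : lowerMinkowskiDim d (K : Set (Euc d)) = 0 := by
  set f : ℝ → ℝ := fun ε => Real.log (coverNum d (K : Set (Euc d)) ε) / (-Real.log ε) with hf
  have hnonneg : ∀ᶠ ε in nhdsWithin (0:ℝ) (Set.Ioi 0), 0 ≤ f ε := by
    filter_upwards [Ioo_mem_nhdsGT_of_mem (⟨le_refl (0:ℝ), one_pos⟩ : (0:ℝ) ∈ Ico (0:ℝ) 1)]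
      with ε hε
    exact div_nonneg (Real.log_natCast_nonneg _) (by nlinarith [Real.log_neg hε.1 hε.2])
  have hfreq : ∀ δ : ℝ, 0 < δ → ∃ᶠ ε in nhdsWithin (0:ℝ) (Set.Ioi 0), f ε ≤ δ := by
    intro δ hδ
    rw [frequently_iff]
    intro U hU
    obtain ⟨u, hu, huU⟩ := mem_nhdsGT_iff_exists_Ioo_subset.mp hU
    obtain ⟨m, hm⟩ := exists_nat_one_div_lt (lt_min hu hδ : (0:ℝ) < min u δ)
    obtain ⟨ε, hεpos, hε1, s, hcov, hlog⟩ := h m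
    have hm' : (1:ℝ) / (m + 1) < min u δ := hm
    refine ⟨ε, huU ⟨hεpos, lt_trans hε1 (lt_of_lt_of_le hm' (min_le_left _ _))⟩, ?_⟩
    have hε1' : ε < 1 := lt_of_lt_of_le hε1 (by rw [div_le_one (by positivity)]; simp)
    have hDpos : (0:ℝ) < -Real.log ε := by nlinarith [Real.log_neg hεpos hε1']
    have hcN : coverNum d (K : Set (Euc d)) ε ≤ s.card :=
      coverNum_le (hcov.trans (iUnion₂_mono fun y _ => ball_subset_closedBall))
    have hnum : Real.log (coverNum d (K : Set (Euc d)) ε) ≤ Real.log s.card := by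
      rcases Nat.eq_zero_or_pos (coverNum d (K : Set (Euc d)) ε) with h0 | h0
      · rw [h0]; simpa using Real.log_natCast_nonneg s.card
      · exact Real.log_le_log (by exact_mod_cast h0) (by exact_mod_cast hcN)
    have hle : f ε ≤ Real.log s.card / (-Real.log ε) := by
      rw [hf]; exact div_le_div_of_nonneg_right hnum hDpos.le
    have hmin : min u δ ≤ δ := min_le_right _ _
    linarith
  have hne : {a : ℝ | ∀ᶠ ε in nhdsWithin (0:ℝ) (Set.Ioi 0), a ≤ f ε}.Nonempty := ⟨0, hnonneg⟩
  have hbdd : BddAbove {a : ℝ | ∀ᶠ ε in nhdsWithin (0:ℝ) (Set.Ioi 0), a ≤ f ε} := by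
    refine ⟨1, fun a ha => ?_⟩
    obtain ⟨ε, h1, h2⟩ := ((hfreq 1 one_pos).and_eventually ha).exists
    linarith
  have key : sSup {a : ℝ | ∀ᶠ ε in nhdsWithin (0:ℝ) (Set.Ioi 0), a ≤ f ε} = 0 := by
    refine le_antisymm (csSup_le hne fun a ha => ?_) (le_csSup hbdd hnonneg)
    by_contra hc
    push_neg at hc
    obtain ⟨ε, h1, h2⟩ := ((hfreq (a/2) (by linarith)).and_eventually ha).exists
    linarith
  rw [lowerMinkowskiDim, liminf_eq]
  exact key

end MinkTest

/-- A typical compact subset of `Q` has lower Minkowski dimension zero: in the space of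
nonempty compact subsets of `Q` with the Hausdorff metric, the collection of sets whose
lower Minkowski dimension is nonzero is meagre. -/
theorem typical_compact_set_lower_minkowski_zero (d : ℕ) (hd : 0 < d) :
    IsMeagre {K : {K : TopologicalSpace.NonemptyCompacts (Euc d) // (K : Set (Euc d)) ⊆ cube d} |
      ¬ lowerMinkowskiDim d (K.1 : Set (Euc d)) = 0} := by
  have hU : ∀ m : ℕ,
      {K : {K : TopologicalSpace.NonemptyCompacts (Euc d) // (K : Set (Euc d)) ⊆ cube d} |
        K.1 ∈ MinkTest.V d m} ∈ residual _ := fun m =>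
    residual_of_dense_open ((MinkTest.isOpen_V d m).preimage continuous_subtype_val)
      (MinkTest.dense_V d m)
  rw [IsMeagre]
  refine Filter.mem_of_superset (countable_iInter_mem.mpr hU) ?_
  intro K hK
  simp only [mem_iInter, mem_setOf_eq] at hK
  simp only [mem_compl_iff, mem_setOf_eq, not_not]
  exact MinkTest.dim_zero hK

end
end
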